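/- arXiv:0903.1501 — 7 statements merged into one kernel-verified Lean document; each statement's English description precedes it below -/
import Mathlib

section
/- Let q ≥ 1, α ∈ (0,1) with qα ≥ 1 and q(1-α) ≥ 1, h ≥ 0, and define f_h(k) = α·e^{h·k} + 1 - α for natural numbers k. Then q·f_h(a)·f_h(b) ≥ f_h(a+b) for all natural numbers a, b ≥ 0. -/
/-- For `q ≥ 1`, `α ∈ (0,1)` with `qα ≥ 1` and `q(1-α) ≥ 1`, `h ≥ 0`, and
`f_h(k) = α e^{hk} + 1 - α`, we have `q f_h(a) f_h(b) ≥ f_h(a+b)` for all naturals `a, b`. -/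
theorem stmt_2 (q α h : ℝ) (hq : 1 ≤ q) (hα : α ∈ Set.Ioo (0 : ℝ) 1)
    (hqα : 1 ≤ q * α) (hqα' : 1 ≤ q * (1 - α)) (hh : 0 ≤ h) (a b : ℕ) :
    q * (α * Real.exp (h * a) + 1 - α) * (α * Real.exp (h * b) + 1 - α) ≥
      α * Real.exp (h * ((a : ℝ) + b)) + 1 - α := by
  obtain ⟨hα0, hα1⟩ := hα
  have hx : 1 ≤ Real.exp (h * a) := Real.one_le_exp (by positivity)
  have hy : 1 ≤ Real.exp (h * b) := Real.one_le_exp (by positivity)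
  have hsum : Real.exp (h * ((a : ℝ) + b)) = Real.exp (h * a) * Real.exp (h * b) := by
    rw [← Real.exp_add]; ring_nf
  rw [hsum]
  nlinarith [mul_nonneg (sub_nonneg.mpr hqα) (mul_nonneg (mul_nonneg hα0.le (le_trans one_pos.le hx)) (le_trans one_pos.le hy)),
    mul_nonneg (sub_nonneg.mpr hqα') (sub_pos.mpr hα1).le,
    mul_nonneg (mul_nonneg (mul_nonneg (le_trans one_pos.le hqα) (sub_pos.mpr hα1).le) (le_trans one_pos.le hx)) (le_trans zero_le_one hy),
    mul_nonneg (mul_nonneg (le_trans one_pos.le hqα) (sub_pos.mpr hα1).le) (le_trans one_pos.le hy)]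
end

section
/- For h ∈ ℝ, α ∈ (0,1), and f_h(k) = α·e^{h·k} + 1 - α, the inequality f_h(a+b+c)·f_h(b) ≥ f_h(a+b)·f_h(b+c) holds for all natural numbers a, b, c. -/
/-- For `h ∈ ℝ`, `α ∈ (0,1)`, and `f_h(k) = α e^{hk} + 1 - α`, the log-supermodularity
inequality `f_h(a+b+c) f_h(b) ≥ f_h(a+b) f_h(b+c)` holds for all naturals `a, b, c`. -/
theorem stmt_3 (α h : ℝ) (hα : α ∈ Set.Ioo (0 : ℝ) 1) (a b c : ℕ) :
    (α * Real.exp (h * ((a : ℝ) + b + c)) + 1 - α) * (α * Real.exp (h * b) + 1 - α) ≥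
      (α * Real.exp (h * ((a : ℝ) + b)) + 1 - α) *
        (α * Real.exp (h * ((b : ℝ) + c)) + 1 - α) := by
  obtain ⟨h0, h1⟩ := hα
  have hstep : ∀ x : ℝ, h * x ≤ 0 ∨ 0 ≤ h * x → True := fun _ _ => trivial
  have key : (Real.exp (h * a) - 1) * (Real.exp (h * c) - 1) ≥ 0 := by
    rcases le_or_gt 0 h with hh | hh
    · have ha : 1 ≤ Real.exp (h * a) := Real.one_le_exp (by positivity)
      have hc : 1 ≤ Real.exp (h * c) := Real.one_le_exp (by positivity)
      nlinarith
    · have ha : Real.exp (h * a) ≤ 1 := Real.exp_le_one_iff.mpr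
        (mul_nonpos_of_nonpos_of_nonneg hh.le (Nat.cast_nonneg a))
      have hc : Real.exp (h * c) ≤ 1 := Real.exp_le_one_iff.mpr
        (mul_nonpos_of_nonpos_of_nonneg hh.le (Nat.cast_nonneg c))
      nlinarith
  have e1 : Real.exp (h * ((a : ℝ) + b + c)) =
      Real.exp (h * a) * Real.exp (h * b) * Real.exp (h * c) := by
    rw [← Real.exp_add, ← Real.exp_add]; ring_nf
  have e2 : Real.exp (h * ((a : ℝ) + b)) = Real.exp (h * a) * Real.exp (h * b) := by
    rw [← Real.exp_add]; ring_nf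
  have e3 : Real.exp (h * ((b : ℝ) + c)) = Real.exp (h * b) * Real.exp (h * c) := by
    rw [← Real.exp_add]; ring_nf
  have hB : 0 < Real.exp (h * b) := Real.exp_pos _
  rw [e1, e2, e3]
  nlinarith [mul_pos h0 (sub_pos.mpr h1), mul_nonneg (mul_pos h0 (sub_pos.mpr h1)).le (mul_nonneg hB.le key)]
end

section
/- Let μ_p : [0,1] → [0,1] be differentiable on (p₁,p₂) ⊆ (0,1), taking values in (0,1), non-decreasing, and satisfy the differential inequality μ_p'(A) ≥ B·μ_p(A)·(1-μ_p(A))·log(1/κ) for all p ∈ (p₁,p₂), where B > 0 and 0 < κ < 1. Then μ_{p₁}(A)·(1-μ_{p₂}(A)) ≤ κ^{B(p₂-p₁)}. -/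
open Real Set

/-- Auxiliary: on a closed interval where `f` takes values in `(0,1)`, is differentiable and
satisfies `f' ≥ c f (1-f)`, the shifted logit `log f - log (1-f) - c·x` is monotone, giving
`f p (1 - f q) ≤ exp (-c (q-p))`. -/
lemma stmt_4_aux (f : ℝ → ℝ) (c p q : ℝ) (hpq : p < q)
    (hdiff : ∀ x ∈ Set.Icc p q, DifferentiableAt ℝ f x)
    (hval : ∀ x ∈ Set.Icc p q, f x ∈ Set.Ioo (0 : ℝ) 1)
    (hineq : ∀ x ∈ Set.Icc p q, deriv f x ≥ c * (f x * (1 - f x))) :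
    f p * (1 - f q) ≤ Real.exp (-(c * (q - p))) := by
  set G : ℝ → ℝ := fun x => Real.log (f x) - Real.log (1 - f x) - c * x with hG
  have hGderiv : ∀ x ∈ Set.Icc p q, HasDerivAt G
      (deriv f x / f x - (-deriv f x) / (1 - f x) - c) x := by
    intro x hx
    have hfx := hval x hx
    have hd := (hdiff x hx).hasDerivAt
    have h1 : HasDerivAt (fun y => Real.log (f y)) (deriv f x / f x) x :=
      hd.log (ne_of_gt hfx.1)
    have h2 : HasDerivAt (fun y => (1 : ℝ) - f y) (0 - deriv f x) x :=
      (hasDerivAt_const x (1:ℝ)).sub hd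
    have h2' : HasDerivAt (fun y => Real.log (1 - f y)) ((0 - deriv f x) / (1 - f x)) x :=
      h2.log (by linarith [hfx.2])
    have h3 : HasDerivAt (fun y => c * y) c x := by
      simpa using (hasDerivAt_id x).const_mul c
    have := (h1.sub h2').sub h3
    simp only [zero_sub] at this
    exact this
  have hGmono : MonotoneOn G (Set.Icc p q) := by
    apply monotoneOn_of_deriv_nonneg (convex_Icc p q)
    · exact fun x hx => ((hGderiv x hx).continuousAt).continuousWithinAt
    · intro x hx
      rw [interior_Icc] at hx
      exact ((hGderiv x (Ioo_subset_Icc_self hx)).differentiableAt).differentiableWithinAt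
    · intro x hx
      rw [interior_Icc] at hx
      have hx' := Ioo_subset_Icc_self hx
      rw [(hGderiv x hx').deriv]
      have hfx := hval x hx'
      have h0 : 0 < f x := hfx.1
      have h1 : 0 < 1 - f x := by linarith [hfx.2]
      have key := hineq x hx'
      have : deriv f x / f x - (-deriv f x) / (1 - f x)
          = deriv f x / (f x * (1 - f x)) := by
        field_simp; ring
      rw [this]
      have : c ≤ deriv f x / (f x * (1 - f x)) := by
        rw [le_div_iff₀ (by positivity)]
        linarith [key]
      linarith
  have hple : G p ≤ G q := hGmono (Set.left_mem_Icc.2 hpq.le) (Set.right_mem_Icc.2 hpq.le) hpq.le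
  have hfp := hval p (Set.left_mem_Icc.2 hpq.le)
  have hfq := hval q (Set.right_mem_Icc.2 hpq.le)
  have h1p : 0 < 1 - f p := by linarith [hfp.2]
  have h1q : 0 < 1 - f q := by linarith [hfq.2]
  -- From G p ≤ G q: log (f p) + log (1 - f q) ≤ log (f q) + log (1 - f p) - c (q - p)
  have hlog : Real.log (f p * (1 - f q)) ≤ Real.log (f q * (1 - f p)) - c * (q - p) := by
    rw [Real.log_mul (ne_of_gt hfp.1) (ne_of_gt h1q),
      Real.log_mul (ne_of_gt hfq.1) (ne_of_gt h1p)]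
    simp only [hG] at hple
    linarith
  have hprod1 : f q * (1 - f p) ≤ 1 := by nlinarith [hfq.2, hfp.1]
  have hlog1 : Real.log (f q * (1 - f p)) ≤ 0 :=
    Real.log_nonpos (mul_nonneg hfq.1.le h1p.le) hprod1
  calc f p * (1 - f q) = Real.exp (Real.log (f p * (1 - f q))) :=
        (Real.exp_log (mul_pos hfp.1 h1q)).symm
    _ ≤ Real.exp (-(c * (q - p))) := Real.exp_le_exp.2 (by linarith)

/-- Integration step of the sharp-threshold corollary: if `f` is non-decreasing on `[0,1]`,
takes values in `(0,1)` on `(p₁,p₂) ⊆ (0,1)`, is differentiable there, and satisfies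
`f' ≥ B f (1-f) log(1/κ)`, then `f(p₁)(1 - f(p₂)) ≤ κ^{B(p₂-p₁)}`. -/
theorem stmt_4 (f : ℝ → ℝ) (p₁ p₂ B κ : ℝ)
    (h0 : 0 < p₁) (h12 : p₁ < p₂) (h1 : p₂ < 1)
    (hB : 0 < B) (hκ0 : 0 < κ) (hκ1 : κ < 1)
    (hmaps : ∀ p ∈ Set.Icc (0 : ℝ) 1, f p ∈ Set.Icc (0 : ℝ) 1)
    (hmono : MonotoneOn f (Set.Icc (0 : ℝ) 1))
    (hval : ∀ p ∈ Set.Ioo p₁ p₂, f p ∈ Set.Ioo (0 : ℝ) 1)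
    (hdiff : ∀ p ∈ Set.Ioo p₁ p₂, DifferentiableAt ℝ f p)
    (hineq : ∀ p ∈ Set.Ioo p₁ p₂,
      deriv f p ≥ B * f p * (1 - f p) * Real.log (1 / κ)) :
    f p₁ * (1 - f p₂) ≤ κ ^ (B * (p₂ - p₁)) := by
  set c : ℝ := B * Real.log (1 / κ) with hc
  -- step bound for interior points
  have step : ∀ ε ∈ Set.Ioo (0:ℝ) ((p₂ - p₁)/2),
      f p₁ * (1 - f p₂) ≤ κ ^ (B * (p₂ - p₁ - 2*ε)) := by
    intro ε hε
    set p := p₁ + ε with hp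
    set q := p₂ - ε with hq
    have hpq : p < q := by simp only [hp, hq]; linarith [hε.2]
    have hsub : Set.Icc p q ⊆ Set.Ioo p₁ p₂ := by
      intro x hx
      exact ⟨by linarith [hx.1, hε.1], by linarith [hx.2, hε.1]⟩
    have haux := stmt_4_aux f c p q hpq
      (fun x hx => hdiff x (hsub hx)) (fun x hx => hval x (hsub hx))
      (fun x hx => by have := hineq x (hsub hx); rw [hc]; linarith [this])
    -- monotonicity: f p₁ ≤ f p and f q ≤ f p₂
    have hmem : ∀ x, p₁ ≤ x → x ≤ p₂ → x ∈ Set.Icc (0:ℝ) 1 :=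
      fun x hx1 hx2 => ⟨by linarith, by linarith⟩
    have hfp1 : f p₁ ≤ f p := hmono (hmem p₁ le_rfl h12.le)
      (hmem p (by linarith [hε.1]) (by linarith [hε.2])) (by linarith [hε.1])
    have hfp2 : f q ≤ f p₂ := hmono (hmem q (by linarith [hε.2]) (by linarith [hε.1]))
      (hmem p₂ h12.le le_rfl) (by linarith [hε.1])
    have hfq := hval q (hsub (Set.right_mem_Icc.2 hpq.le))
    have hfp := hval p (hsub (Set.left_mem_Icc.2 hpq.le))
    have hfp₁0 : 0 ≤ f p₁ := (hmaps p₁ (hmem p₁ le_rfl h12.le)).1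
    have h1 : f p₁ * (1 - f p₂) ≤ f p * (1 - f q) := by nlinarith [hfp.1, hfq.2]
    have hexp : Real.exp (-(c * (q - p))) = κ ^ (B * (p₂ - p₁ - 2*ε)) := by
      rw [Real.rpow_def_of_pos hκ0, hc, Real.log_div one_ne_zero (ne_of_gt hκ0),
        Real.log_one]
      congr 1
      simp only [hp, hq]
      ring
    linarith [haux, hexp ▸ haux]
  -- take the limit ε → 0⁺
  have heq : ∀ ε : ℝ, κ ^ (B * (p₂ - p₁ - 2*ε))
      = Real.exp (Real.log κ * (B * (p₂ - p₁ - 2*ε))) :=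
    fun ε => Real.rpow_def_of_pos hκ0 _
  have hlim : Filter.Tendsto (fun ε : ℝ => κ ^ (B * (p₂ - p₁ - 2*ε)))
      (nhdsWithin 0 (Set.Ioo (0:ℝ) ((p₂ - p₁)/2))) (nhds (κ ^ (B * (p₂ - p₁)))) := by
    have hcont : Continuous fun ε : ℝ => Real.exp (Real.log κ * (B * (p₂ - p₁ - 2*ε))) := by
      continuity
    have h0' : κ ^ (B * (p₂ - p₁)) = Real.exp (Real.log κ * (B * (p₂ - p₁ - 2*0))) := by
      rw [← heq]; norm_num
    rw [h0']
    simp only [heq]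
    exact (hcont.tendsto 0).mono_left nhdsWithin_le_nhds
  haveI hne : (nhdsWithin (0:ℝ) (Set.Ioo (0:ℝ) ((p₂ - p₁)/2))).NeBot := by
    rw [← mem_closure_iff_nhdsWithin_neBot,
      closure_Ioo (by intro h; nlinarith [h12] : (0:ℝ) ≠ (p₂ - p₁)/2)]
    exact ⟨le_rfl, by linarith⟩
  exact ge_of_tendsto hlim (Filter.eventually_iff_exists_mem.2
    ⟨Set.Ioo (0:ℝ) ((p₂ - p₁)/2), self_mem_nhdsWithin, step⟩)
end

section
/- Let μ be a strictly positive probability measure on {0,1}^E for a finite set E. Then μ satisfies the FKG lattice condition if and only if μ(ω^{e,f})·μ(ω) ≥ μ(ω^e)·μ(ω^f) for all ω with ω(e) = ω(f) = 0 and all distinct e, f ∈ E, where ω^e denotes ω with coordinate e set to 1 and ω^{e,f} denotes ω with both coordinates e and f set to 1. -/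
open Finset Function

private lemma fkg_lemA {E : Type} [Fintype E] [DecidableEq E]
    (μ : (E → Bool) → ℝ) (hpos : ∀ ω, 0 < μ ω)
    (h : ∀ (ω : E → Bool) (e f : E), e ≠ f → ω e = false → ω f = false →
      μ (Function.update (Function.update ω e true) f true) * μ ω ≥
        μ (Function.update ω e true) * μ (Function.update ω f true)) :
    ∀ (n : ℕ) (ω ω' : E → Bool),
      (univ.filter (fun g => ω g = false ∧ ω' g = true)).card ≤ n →
      (∀ g, ω g = true → ω' g = true) → ∀ e, ω' e = false →
      μ (Function.update ω' e true) * μ ω ≥ μ (Function.update ω e true) * μ ω' := by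
  intro n
  induction n with
  | zero =>
    intro ω ω' hcard hle e he
    have heq : ω = ω' := by
      funext g
      by_contra hg
      have h1 : ω g = false ∧ ω' g = true := by
        cases h1 : ω g <;> cases h2 : ω' g <;> simp_all
      have : g ∈ univ.filter (fun g => ω g = false ∧ ω' g = true) := by
        simp [h1.1, h1.2]
      have := card_pos.mpr ⟨g, this⟩
      omega
    subst heq
    exact le_of_eq rfl
  | succ n ih =>
    intro ω ω' hcard hle e he
    by_cases hS : (univ.filter (fun g => ω g = false ∧ ω' g = true)).card ≤ n
    · exact ih ω ω' hS hle e he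
    · have hposcard : 0 < (univ.filter (fun g => ω g = false ∧ ω' g = true)).card := by omega
      obtain ⟨f, hf⟩ := card_pos.mp hposcard
      simp only [mem_filter, mem_univ, true_and] at hf
      obtain ⟨hωf, hω'f⟩ := hf
      have hef : e ≠ f := by
        intro hef; rw [hef] at he; rw [he] at hω'f; exact Bool.noConfusion hω'f
      have hωe : ω e = false := by
        cases h1 : ω e
        · rfl
        · exact absurd (hle e h1) (by simp [he])
      set σ : E → Bool := Function.update ω f true with hσ
      have hσle : ∀ g, σ g = true → ω' g = true := by
        intro g hg
        by_cases hgf : g = f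
        · subst hgf; exact hω'f
        · exact hle g (by simpa [hσ, Function.update, hgf] using hg)
      have hσcard : (univ.filter (fun g => σ g = false ∧ ω' g = true)).card ≤ n := by
        have hsub : univ.filter (fun g => σ g = false ∧ ω' g = true)
            ⊆ (univ.filter (fun g => ω g = false ∧ ω' g = true)).erase f := by
          intro g hg
          simp only [mem_filter, mem_univ, true_and] at hg
          rw [mem_erase]
          constructor
          · intro hgf; subst hgf; simp [hσ, Function.update] at hg
          · simp only [mem_filter, mem_univ, true_and]
            refine ⟨?_, hg.2⟩
            have : g ≠ f := by intro hgf; subst hgf; simp [hσ] at hg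
            simpa [hσ, Function.update, this] using hg.1
        have := card_le_card hsub
        have := card_erase_le (s := univ.filter (fun g => ω g = false ∧ ω' g = true)) (a := f)
        have hc := card_erase_of_mem (by simp [hωf, hω'f] :
          f ∈ univ.filter (fun g => ω g = false ∧ ω' g = true))
        omega
      have hσe : σ e = false := by simp [hσ, Function.update, hef, hωe]
      have h1 := ih σ ω' hσcard hσle e he
      have h2 := h ω e f hef hωe hωf
      have hcomm : Function.update (Function.update ω e true) f true =
          Function.update σ e true := by
        rw [hσ]; rw [Function.update_comm hef]
      rw [hcomm] at h2
      -- h1 : μ (update ω' e true) * μ σ ≥ μ (update σ e true) * μ ω'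
      -- h2 : μ (update σ e true) * μ ω ≥ μ (update ω e true) * μ σ
      have key : (μ (Function.update ω e true) * μ ω') * (μ σ * μ (Function.update σ e true)) ≤
          (μ (Function.update ω' e true) * μ ω) * (μ σ * μ (Function.update σ e true)) := by
        calc (μ (Function.update ω e true) * μ ω') * (μ σ * μ (Function.update σ e true))
            = (μ (Function.update ω e true) * μ σ) * (μ (Function.update σ e true) * μ ω') := by
              ring
          _ ≤ (μ (Function.update σ e true) * μ ω) * (μ (Function.update ω' e true) * μ σ) :=
              mul_le_mul h2 h1 (by exact (mul_pos (hpos _) (hpos _)).le) (by exact (mul_pos (hpos _) (hpos _)).le)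
          _ = (μ (Function.update ω' e true) * μ ω) * (μ σ * μ (Function.update σ e true)) := by
              ring
      exact le_of_mul_le_mul_right key (mul_pos (hpos _) (hpos _))

/-- A strictly positive measure `μ` on `{0,1}^E` satisfies the FKG lattice condition if and
only if `μ(ω^{e,f}) μ(ω) ≥ μ(ω^e) μ(ω^f)` for all `ω` with `ω(e) = ω(f) = 0` and all
distinct `e, f`. -/
theorem stmt_13 {E : Type} [Fintype E] [DecidableEq E]
    (μ : (E → Bool) → ℝ) (hpos : ∀ ω, 0 < μ ω) :
    (∀ ω₁ ω₂ : E → Bool,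
      μ (fun e => ω₁ e || ω₂ e) * μ (fun e => ω₁ e && ω₂ e) ≥ μ ω₁ * μ ω₂) ↔
    (∀ (ω : E → Bool) (e f : E), e ≠ f → ω e = false → ω f = false →
      μ (Function.update (Function.update ω e true) f true) * μ ω ≥
        μ (Function.update ω e true) * μ (Function.update ω f true)) := by
  constructor
  · intro H ω e f hef he hf
    have := H (Function.update ω e true) (Function.update ω f true)
    have hor : (fun g => Function.update ω e true g || Function.update ω f true g) =
        Function.update (Function.update ω e true) f true := by
      funext g
      by_cases hge : g = e <;> by_cases hgf : g = f <;>
        simp_all [Function.update]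
    have hand : (fun g => Function.update ω e true g && Function.update ω f true g) = ω := by
      funext g
      by_cases hge : g = e <;> by_cases hgf : g = f <;>
        simp_all [Function.update]
    rw [hor, hand] at this
    exact this
  · intro h
    have main : ∀ (n : ℕ) (ω₁ ω₂ : E → Bool),
        (univ.filter (fun g => ω₁ g = true ∧ ω₂ g = false)).card ≤ n →
        μ (fun e => ω₁ e || ω₂ e) * μ (fun e => ω₁ e && ω₂ e) ≥ μ ω₁ * μ ω₂ := by
      intro n
      induction n with
      | zero =>
        intro ω₁ ω₂ hcard
        have hle : ∀ g, ω₁ g = true → ω₂ g = true := by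
          intro g hg
          by_contra hg2
          have hg2' : ω₂ g = false := by cases h2 : ω₂ g; rfl; exact absurd h2 hg2
          have : g ∈ univ.filter (fun g => ω₁ g = true ∧ ω₂ g = false) := by
            simp [hg, hg2']
          have := card_pos.mpr ⟨g, this⟩
          omega
        have hor : (fun e => ω₁ e || ω₂ e) = ω₂ := by
          funext g; cases h1 : ω₁ g
          · simp
          · simp [hle g h1]
        have hand : (fun e => ω₁ e && ω₂ e) = ω₁ := by
          funext g; cases h1 : ω₁ g
          · simp
          · simp [hle g h1, h1]
        rw [hor, hand, mul_comm]
      | succ n ih =>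
        intro ω₁ ω₂ hcard
        by_cases hS : (univ.filter (fun g => ω₁ g = true ∧ ω₂ g = false)).card ≤ n
        · exact ih ω₁ ω₂ hS
        · have hposcard : 0 < (univ.filter (fun g => ω₁ g = true ∧ ω₂ g = false)).card := by
            omega
          obtain ⟨e, he⟩ := card_pos.mp hposcard
          simp only [mem_filter, mem_univ, true_and] at he
          obtain ⟨h1e, h2e⟩ := he
          set ω₁' : E → Bool := Function.update ω₁ e false with hω₁'
          have hup : Function.update ω₁' e true = ω₁ := by
            rw [hω₁']
            funext g
            by_cases hge : g = e
            · subst hge; simp [Function.update, h1e]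
            · simp [Function.update, hge]
          have hcard' : (univ.filter (fun g => ω₁' g = true ∧ ω₂ g = false)).card ≤ n := by
            have hsub : univ.filter (fun g => ω₁' g = true ∧ ω₂ g = false)
                ⊆ (univ.filter (fun g => ω₁ g = true ∧ ω₂ g = false)).erase e := by
              intro g hg
              simp only [mem_filter, mem_univ, true_and] at hg
              rw [mem_erase]
              have hge : g ≠ e := by
                intro hge; subst hge; simp [hω₁', Function.update] at hg
              refine ⟨hge, ?_⟩
              simp only [mem_filter, mem_univ, true_and]
              exact ⟨by simpa [hω₁', Function.update, hge] using hg.1, hg.2⟩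
            have := card_le_card hsub
            have hc := card_erase_of_mem (by simp [h1e, h2e] :
              e ∈ univ.filter (fun g => ω₁ g = true ∧ ω₂ g = false))
            omega
          have ihA := ih ω₁' ω₂ hcard'
          -- Lemma A with ω = ω₁', ω' = ω₁' ∨ ω₂, coordinate e
          set Z' : E → Bool := fun g => ω₁' g || ω₂ g with hZ'
          have hZ'e : Z' e = false := by
            simp [hZ', hω₁', Function.update, h2e]
          have hleA : ∀ g, ω₁' g = true → Z' g = true := by
            intro g hg; simp [hZ', hg]
          have lemA := fkg_lemA μ hpos h
            (univ.filter (fun g => ω₁' g = false ∧ Z' g = true)).card ω₁' Z'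
            le_rfl hleA e hZ'e
          -- identifications
          have horZ : Function.update Z' e true = fun g => ω₁ g || ω₂ g := by
            funext g
            by_cases hge : g = e
            · subst hge; simp [Function.update, h1e]
            · simp [hZ', hω₁', Function.update, hge]
          have handZ : (fun g => ω₁' g && ω₂ g) = (fun g => ω₁ g && ω₂ g) := by
            funext g
            by_cases hge : g = e
            · subst hge; simp [hω₁', Function.update, h2e]
            · simp [hω₁', Function.update, hge]
          rw [hup, horZ] at lemA
          rw [handZ] at ihA
          -- lemA : μ (ω₁∨ω₂) * μ ω₁' ≥ μ ω₁ * μ Z'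
          -- ihA  : μ Z' * μ (ω₁∧ω₂) ≥ μ ω₁' * μ ω₂
          have key : (μ ω₁ * μ ω₂) * (μ ω₁' * μ Z') ≤
              (μ (fun g => ω₁ g || ω₂ g) * μ (fun g => ω₁ g && ω₂ g)) * (μ ω₁' * μ Z') := by
            calc (μ ω₁ * μ ω₂) * (μ ω₁' * μ Z')
                = (μ ω₁ * μ Z') * (μ ω₁' * μ ω₂) := by ring
              _ ≤ (μ (fun g => ω₁ g || ω₂ g) * μ ω₁') * (μ Z' * μ (fun g => ω₁ g && ω₂ g)) :=
                  mul_le_mul lemA ihA (by exact (mul_pos (hpos _) (hpos _)).le) (by exact (mul_pos (hpos _) (hpos _)).le)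
              _ = (μ (fun g => ω₁ g || ω₂ g) * μ (fun g => ω₁ g && ω₂ g)) * (μ ω₁' * μ Z') := by
                  ring
          exact le_of_mul_le_mul_right key (mul_pos (hpos _) (hpos _))
    intro ω₁ ω₂
    exact main _ ω₁ ω₂ le_rfl
end

section
/- Let S be a finite set, μ a strictly positive probability measure on Ω = {0,1}^S, μ_p the tilted measure μ_p(ω) ∝ p^{|ω|}(1-p)^{|S|-|ω|}μ(ω) where |ω| = Σ_s ω(s), and A ⊆ Ω any event. Then d/dp μ_p(A) = (1/(p(1-p))) Σ_{s∈S} [μ_p(1_A·1_s) - μ_p(A)·μ_p(1_s)], i.e. the derivative equals the sum over s of the covariances of 1_A and 1_s, divided by p(1-p). -/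
open Finset

/-- The unnormalized Bernoulli(`r`)-tilted weight of `ω`. -/
noncomputable def tiltWeight {S : Type} [Fintype S]
    (μ : (S → Bool) → ℝ) (r : ℝ) (ω : S → Bool) : ℝ :=
  (∏ s : S, if ω s then r else 1 - r) * μ ω

/-- The `μ_r`-probability of the event `A`. -/
noncomputable def tiltProb {S : Type} [Fintype S] [DecidableEq S]
    (μ : (S → Bool) → ℝ) (r : ℝ) (A : Finset (S → Bool)) : ℝ :=
  (∑ ω ∈ A, tiltWeight μ r ω) / ∑ ω : S → Bool, tiltWeight μ r ω

lemma key_stmt15 {ι : Type} [Fintype ι] (a b : ι → ℝ) (nn zz p : ℝ)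
    (hp : p ≠ 0) (h1p : (1 : ℝ) - p ≠ 0) (hz : zz ≠ 0) :
    (1 / (p * (1 - p))) * ∑ s : ι, (a s / zz - nn / zz * (b s / zz))
      = ((∑ s : ι, (a s / p - (nn - a s) / (1 - p))) * zz
          - nn * ∑ s : ι, (b s / p - (zz - b s) / (1 - p))) / zz ^ 2 := by
  rw [Finset.mul_sum, Finset.sum_mul, Finset.mul_sum, ← Finset.sum_sub_distrib,
    Finset.sum_div]
  refine Finset.sum_congr rfl fun s _ => ?_
  field_simp
  ring

/-- Margulis–Russo-type formula for tilted measures: for any event `A`,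
`d/dp μ_p(A) = (1/(p(1-p))) Σ_s [μ_p(1_A 1_s) - μ_p(A) μ_p(1_s)]`. -/
theorem stmt_15 {S : Type} [Fintype S] [DecidableEq S]
    (μ : (S → Bool) → ℝ) (hpos : ∀ ω, 0 < μ ω)
    (A : Finset (S → Bool)) (p : ℝ) (hp : p ∈ Set.Ioo (0 : ℝ) 1) :
    HasDerivAt (fun r : ℝ => tiltProb μ r A)
      ((1 / (p * (1 - p))) * ∑ s : S,
        (tiltProb μ p (A.filter (fun ω => ω s = true)) -
          tiltProb μ p A *
            tiltProb μ p (Finset.univ.filter (fun ω : S → Bool => ω s = true)))) p := by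
  obtain ⟨hp0, hp1⟩ := hp
  have h1p : 0 < 1 - p := by linarith
  have hp0' : p ≠ 0 := ne_of_gt hp0
  have h1p' : (1 : ℝ) - p ≠ 0 := ne_of_gt h1p
  -- positivity of weights
  have hwpos : ∀ ω : S → Bool, 0 < tiltWeight μ p ω := by
    intro ω
    refine mul_pos (Finset.prod_pos fun s _ => ?_) (hpos ω)
    by_cases h : ω s <;> simp [h, hp0, h1p]
  -- derivative of each weight
  have hw : ∀ ω : S → Bool, HasDerivAt (fun r => tiltWeight μ r ω)
      (∑ s : S, (if ω s = true then tiltWeight μ p ω / p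
        else -(tiltWeight μ p ω / (1 - p)))) p := by
    intro ω
    have hprod : HasDerivAt (fun r : ℝ => ∏ s : S, (if ω s then r else 1 - r))
        (∑ s : S, (∏ t ∈ Finset.univ.erase s, (if ω t then p else 1 - p)) •
          (if ω s then (1 : ℝ) else -1)) p := by
      apply HasDerivAt.fun_finsetProd
      intro s _
      by_cases h : ω s
      · simpa [h] using hasDerivAt_id' p
      · simpa [h] using (hasDerivAt_id p).const_sub 1
    have h2 := hprod.mul_const (μ ω)
    have heq : (∑ s : S, (∏ t ∈ Finset.univ.erase s, (if ω t then p else 1 - p)) •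
          (if ω s then (1 : ℝ) else -1)) * μ ω
        = ∑ s : S, (if ω s = true then tiltWeight μ p ω / p
            else -(tiltWeight μ p ω / (1 - p))) := by
      rw [Finset.sum_mul]
      refine Finset.sum_congr rfl fun s _ => ?_
      have hfull : (∏ t : S, (if ω t then p else 1 - p))
          = (if ω s then p else 1 - p) *
            ∏ t ∈ Finset.univ.erase s, (if ω t then p else 1 - p) :=
        (Finset.mul_prod_erase _ _ (Finset.mem_univ s)).symm
      by_cases h : ω s <;>
        simp only [h, if_true, if_false, smul_eq_mul, mul_one, tiltWeight, hfull,
          Bool.false_eq_true] <;>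
      · field_simp
    rw [heq] at h2
    exact h2
  -- derivative of numerator and denominator
  have hN : HasDerivAt (fun r => ∑ ω ∈ A, tiltWeight μ r ω)
      (∑ ω ∈ A, ∑ s : S, (if ω s = true then tiltWeight μ p ω / p
        else -(tiltWeight μ p ω / (1 - p)))) p :=
    HasDerivAt.fun_sum fun ω _ => hw ω
  have hZ : HasDerivAt (fun r => ∑ ω : S → Bool, tiltWeight μ r ω)
      (∑ ω : S → Bool, ∑ s : S, (if ω s = true then tiltWeight μ p ω / p
        else -(tiltWeight μ p ω / (1 - p)))) p :=
    HasDerivAt.fun_sum fun ω _ => hw ω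
  have hZpos : 0 < ∑ ω : S → Bool, tiltWeight μ p ω :=
    Finset.sum_pos (fun ω _ => hwpos ω) ⟨fun _ => true, Finset.mem_univ _⟩
  have hZne : (∑ ω : S → Bool, tiltWeight μ p ω) ≠ 0 := ne_of_gt hZpos
  have hdiv := hN.div hZ hZne
  -- rewrite the derivative sums
  have sum_split : ∀ (B : Finset (S → Bool)),
      (∑ ω ∈ B, ∑ s : S, (if ω s = true then tiltWeight μ p ω / p
        else -(tiltWeight μ p ω / (1 - p))))
      = ∑ s : S, ((∑ ω ∈ B.filter (fun ω => ω s = true), tiltWeight μ p ω) / p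
          - ((∑ ω ∈ B, tiltWeight μ p ω)
            - ∑ ω ∈ B.filter (fun ω => ω s = true), tiltWeight μ p ω) / (1 - p)) := by
    intro B
    rw [Finset.sum_comm]
    refine Finset.sum_congr rfl fun s _ => ?_
    rw [Finset.sum_ite, ← Finset.sum_div]
    simp only [← neg_div, Finset.sum_neg_distrib, ← Finset.sum_div]
    have hsplit : (∑ ω ∈ B.filter (fun ω => ω s = true), tiltWeight μ p ω)
        + ∑ ω ∈ B.filter (fun ω => ¬ (ω s = true)), tiltWeight μ p ω
        = ∑ ω ∈ B, tiltWeight μ p ω :=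
      Finset.sum_filter_add_sum_filter_not _ _ _
    have : (∑ ω ∈ B.filter (fun ω => ¬ (ω s = true)), tiltWeight μ p ω)
        = (∑ ω ∈ B, tiltWeight μ p ω)
          - ∑ ω ∈ B.filter (fun ω => ω s = true), tiltWeight μ p ω := by linarith
    rw [this]
    ring
  rw [sum_split A, sum_split Finset.univ] at hdiv
  convert hdiv using 1
  · rfl
  · rfl
  · rfl
  simp only [tiltProb]
  exact key_stmt15 _ _ _ _ _ hp0' h1p' hZne
end

section
/- Let q ≥ 1, α ∈ (0,1) with qα < 1 and q(1-α) ≥ 1. Then there exists a finite graph G and p ∈ (0,1) such that the coloured random-cluster measure π_{p,q,α} on {0,1}^V is not monotone. Specifically, on the 4-cycle with vertices u, x, v, y (in cyclic order), taking A = {u,v}, the monotonicity inequality π(A∪{x,y})·π(A) ≥ π(A∪{x})·π(A∪{y}) fails. -/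
open Finset

/-- The open subgraph of an edge-configuration `ω`. -/
def openGraph {V E : Type} (ends : E → Sym2 V) (ω : E → Bool) : SimpleGraph V :=
  SimpleGraph.fromEdgeSet {s : Sym2 V | ∃ e, ω e = true ∧ ends e = s}

/-- The random-cluster weight `(∏_e p^{ω(e)}(1-p)^{1-ω(e)}) q^{k(ω)}`. -/
noncomputable def rcWeight {V E : Type} [Fintype V] [Fintype E]
    (ends : E → Sym2 V) (p q : ℝ) (ω : E → Bool) : ℝ :=
  (∏ e : E, if ω e then p else 1 - p) *
    q ^ Nat.card (openGraph ends ω).ConnectedComponent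

open scoped Classical in
/-- The weight of a pair `(ω, σ)` in the coloured random-cluster model: the spin vector
`σ` must be constant on each open cluster of `ω`, and each open cluster `C` receives spin
`1` with odds `α e^{h|C|}` to `1-α`. -/
noncomputable def crcmPairWeight {V E : Type} [Fintype V] [Fintype E]
    (ends : E → Sym2 V) (p q α h : ℝ) (ω : E → Bool) (σ : V → Bool) : ℝ :=
  if ∀ v w : V, (openGraph ends ω).Reachable v w → σ v = σ w then
    rcWeight ends p q ω *
      ∏ᶠ C : (openGraph ends ω).ConnectedComponent,
        (if σ C.out then α * Real.exp (h * Nat.card C.supp) else 1 - α)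
  else 0

/-- The probability `π_{p,q,α}(σ)` of a given spin vector `σ` under the coloured
random-cluster model (with zero external field). -/
noncomputable def crcmSpinProb {V E : Type} [Fintype V] [Fintype E]
    [DecidableEq V] [DecidableEq E]
    (ends : E → Sym2 V) (p q α : ℝ) (σ : V → Bool) : ℝ :=
  (∑ ω : E → Bool, crcmPairWeight ends p q α 0 ω σ) /
    ∑ ωσ : (E → Bool) × (V → Bool), crcmPairWeight ends p q α 0 ωσ.1 ωσ.2

/-- The endpoint map of the 4-cycle on vertices `0, 1, 2, 3` (in cyclic order). -/
def cycle4 : Fin 4 → Sym2 (Fin 4) := fun i => s(i, i + 1)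

open SimpleGraph

lemma walk_const {V : Type} {G : SimpleGraph V} {β : Type} (c : V → β)
    (hadj : ∀ v w, G.Adj v w → c v = c w) {v w : V} (p : G.Walk v w) : c v = c w := by
  induction p with
  | nil => rfl
  | cons ha _ ih => exact (hadj _ _ ha).trans ih

lemma reach_const {V : Type} {G : SimpleGraph V} {β : Type} (c : V → β)
    (hadj : ∀ v w, G.Adj v w → c v = c w) {v w : V} (h : G.Reachable v w) : c v = c w :=
  h.elim (walk_const c hadj)

noncomputable def compEquiv {V : Type} {G : SimpleGraph V} {k : ℕ} (c : V → Fin k) (s : Fin k → V)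
    (hcs : ∀ i, c (s i) = i)
    (hadj : ∀ v w, G.Adj v w → c v = c w)
    (hrev : ∀ v, G.Reachable (s (c v)) v) : G.ConnectedComponent ≃ Fin k where
  toFun := ConnectedComponent.lift c (fun v w p _ => reach_const c hadj p.reachable)
  invFun := fun i => G.connectedComponentMk (s i)
  left_inv := by
    refine ConnectedComponent.ind (fun v => ?_)
    exact ConnectedComponent.sound (hrev v)
  right_inv := fun i => by simp [hcs]

open scoped Classical in
lemma pairWeight_eval {V E : Type} [Fintype V] [Fintype E]
    (ends : E → Sym2 V) (p q α : ℝ) (ω : E → Bool) (σ : V → Bool) {k : ℕ}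
    (c : V → Fin k) (s : Fin k → V)
    (hcs : ∀ i, c (s i) = i)
    (hadj : ∀ v w, (openGraph ends ω).Adj v w → c v = c w)
    (hrev : ∀ v, (openGraph ends ω).Reachable (s (c v)) v)
    (hσ : ∀ v w, (openGraph ends ω).Adj v w → σ v = σ w) :
    crcmPairWeight ends p q α 0 ω σ =
      (∏ e : E, if ω e then p else 1 - p) * q ^ k *
        ∏ i : Fin k, (if σ (s i) then α else 1 - α) := by
  have hcompat : ∀ v w, (openGraph ends ω).Reachable v w → σ v = σ w :=
    fun v w h => reach_const σ hσ h
  rw [crcmPairWeight, if_pos hcompat, rcWeight,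
    Nat.card_eq_of_equiv_fin (compEquiv c s hcs hadj hrev)]
  have hfin : (∏ᶠ C : (openGraph ends ω).ConnectedComponent,
      (if σ C.out then α * Real.exp (0 * Nat.card C.supp) else 1 - α)) =
      ∏ i : Fin k, (if σ (s i) then α else 1 - α) := by
    rw [← finprod_comp_equiv (compEquiv c s hcs hadj hrev).symm, finprod_eq_prod_of_fintype]
    refine Finset.prod_congr rfl (fun i _ => ?_)
    have h2 : σ ((compEquiv c s hcs hadj hrev).symm i).out = σ (s i) := by
      refine hcompat _ _ ?_
      rw [← SimpleGraph.ConnectedComponent.eq]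
      show (openGraph ends ω).connectedComponentMk _ = _
      exact Quot.out_eq _
    rw [h2]
    simp [Real.exp_zero]
  rw [hfin, mul_assoc]

lemma adj_iff (ω : Fin 4 → Bool) (v w : Fin 4) :
    (openGraph cycle4 ω).Adj v w ↔ ((∃ e, ω e = true ∧ cycle4 e = s(v,w)) ∧ v ≠ w) := by
  rw [openGraph, SimpleGraph.fromEdgeSet_adj]; rfl

lemma cyc_adj (ω : Fin 4 → Bool) (e : Fin 4) (he : ω e = true) {v w : Fin 4}
    (h : cycle4 e = s(v,w)) (hne : v ≠ w) : (openGraph cycle4 ω).Adj v w :=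
  (adj_iff ω v w).mpr ⟨⟨e, he, h⟩, hne⟩
lemma eval_0 (p q α : ℝ) (σ : Fin 4 → Bool)
    (hσ : ∀ v w, (openGraph cycle4 ![false,false,false,false]).Adj v w → σ v = σ w) :
    crcmPairWeight cycle4 p q α 0 ![false,false,false,false] σ =
      (∏ e : Fin 4, if ![false,false,false,false] e then p else 1 - p) * q ^ 4 *
        ∏ i : Fin 4, (if σ (![0,1,2,3] i) then α else 1 - α) :=
  pairWeight_eval _ _ _ _ _ _ (![0,1,2,3] : Fin 4 → Fin 4) ![0,1,2,3] (by decide)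
    (by simp only [adj_iff]; decide)
    (by
      intro v
      fin_cases v
      · exact SimpleGraph.Reachable.refl _
      · exact SimpleGraph.Reachable.refl _
      · exact SimpleGraph.Reachable.refl _
      · exact SimpleGraph.Reachable.refl _)
    hσ

lemma eval_1 (p q α : ℝ) (σ : Fin 4 → Bool)
    (hσ : ∀ v w, (openGraph cycle4 ![true,false,false,false]).Adj v w → σ v = σ w) :
    crcmPairWeight cycle4 p q α 0 ![true,false,false,false] σ =
      (∏ e : Fin 4, if ![true,false,false,false] e then p else 1 - p) * q ^ 3 *
        ∏ i : Fin 3, (if σ (![0,2,3] i) then α else 1 - α) :=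
  pairWeight_eval _ _ _ _ _ _ (![0,0,1,2] : Fin 4 → Fin 3) ![0,2,3] (by decide)
    (by simp only [adj_iff]; decide)
    (by
      intro v
      fin_cases v
      · exact SimpleGraph.Reachable.refl _
      · exact (show (openGraph cycle4 ![true,false,false,false]).Reachable 0 1 from (cyc_adj _ 0 rfl (by decide) (by decide)).reachable)
      · exact SimpleGraph.Reachable.refl _
      · exact SimpleGraph.Reachable.refl _)
    hσ

lemma eval_2 (p q α : ℝ) (σ : Fin 4 → Bool)
    (hσ : ∀ v w, (openGraph cycle4 ![false,true,false,false]).Adj v w → σ v = σ w) :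
    crcmPairWeight cycle4 p q α 0 ![false,true,false,false] σ =
      (∏ e : Fin 4, if ![false,true,false,false] e then p else 1 - p) * q ^ 3 *
        ∏ i : Fin 3, (if σ (![0,1,3] i) then α else 1 - α) :=
  pairWeight_eval _ _ _ _ _ _ (![0,1,1,2] : Fin 4 → Fin 3) ![0,1,3] (by decide)
    (by simp only [adj_iff]; decide)
    (by
      intro v
      fin_cases v
      · exact SimpleGraph.Reachable.refl _
      · exact SimpleGraph.Reachable.refl _
      · exact (show (openGraph cycle4 ![false,true,false,false]).Reachable 1 2 from (cyc_adj _ 1 rfl (by decide) (by decide)).reachable)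
      · exact SimpleGraph.Reachable.refl _)
    hσ

lemma eval_3 (p q α : ℝ) (σ : Fin 4 → Bool)
    (hσ : ∀ v w, (openGraph cycle4 ![true,true,false,false]).Adj v w → σ v = σ w) :
    crcmPairWeight cycle4 p q α 0 ![true,true,false,false] σ =
      (∏ e : Fin 4, if ![true,true,false,false] e then p else 1 - p) * q ^ 2 *
        ∏ i : Fin 2, (if σ (![0,3] i) then α else 1 - α) :=
  pairWeight_eval _ _ _ _ _ _ (![0,0,0,1] : Fin 4 → Fin 2) ![0,3] (by decide)
    (by simp only [adj_iff]; decide)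
    (by
      intro v
      fin_cases v
      · exact SimpleGraph.Reachable.refl _
      · exact (show (openGraph cycle4 ![true,true,false,false]).Reachable 0 1 from (cyc_adj _ 0 rfl (by decide) (by decide)).reachable)
      · exact ((show (openGraph cycle4 ![true,true,false,false]).Reachable 0 1 from (cyc_adj _ 0 rfl (by decide) (by decide)).reachable).trans (show (openGraph cycle4 ![true,true,false,false]).Reachable 1 2 from (cyc_adj _ 1 rfl (by decide) (by decide)).reachable))
      · exact SimpleGraph.Reachable.refl _)
    hσ

lemma eval_4 (p q α : ℝ) (σ : Fin 4 → Bool)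
    (hσ : ∀ v w, (openGraph cycle4 ![false,false,true,false]).Adj v w → σ v = σ w) :
    crcmPairWeight cycle4 p q α 0 ![false,false,true,false] σ =
      (∏ e : Fin 4, if ![false,false,true,false] e then p else 1 - p) * q ^ 3 *
        ∏ i : Fin 3, (if σ (![0,1,2] i) then α else 1 - α) :=
  pairWeight_eval _ _ _ _ _ _ (![0,1,2,2] : Fin 4 → Fin 3) ![0,1,2] (by decide)
    (by simp only [adj_iff]; decide)
    (by
      intro v
      fin_cases v
      · exact SimpleGraph.Reachable.refl _
      · exact SimpleGraph.Reachable.refl _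
      · exact SimpleGraph.Reachable.refl _
      · exact (show (openGraph cycle4 ![false,false,true,false]).Reachable 2 3 from (cyc_adj _ 2 rfl (by decide) (by decide)).reachable))
    hσ

lemma eval_5 (p q α : ℝ) (σ : Fin 4 → Bool)
    (hσ : ∀ v w, (openGraph cycle4 ![true,false,true,false]).Adj v w → σ v = σ w) :
    crcmPairWeight cycle4 p q α 0 ![true,false,true,false] σ =
      (∏ e : Fin 4, if ![true,false,true,false] e then p else 1 - p) * q ^ 2 *
        ∏ i : Fin 2, (if σ (![0,2] i) then α else 1 - α) :=
  pairWeight_eval _ _ _ _ _ _ (![0,0,1,1] : Fin 4 → Fin 2) ![0,2] (by decide)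
    (by simp only [adj_iff]; decide)
    (by
      intro v
      fin_cases v
      · exact SimpleGraph.Reachable.refl _
      · exact (show (openGraph cycle4 ![true,false,true,false]).Reachable 0 1 from (cyc_adj _ 0 rfl (by decide) (by decide)).reachable)
      · exact SimpleGraph.Reachable.refl _
      · exact (show (openGraph cycle4 ![true,false,true,false]).Reachable 2 3 from (cyc_adj _ 2 rfl (by decide) (by decide)).reachable))
    hσ

lemma eval_6 (p q α : ℝ) (σ : Fin 4 → Bool)
    (hσ : ∀ v w, (openGraph cycle4 ![false,true,true,false]).Adj v w → σ v = σ w) :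
    crcmPairWeight cycle4 p q α 0 ![false,true,true,false] σ =
      (∏ e : Fin 4, if ![false,true,true,false] e then p else 1 - p) * q ^ 2 *
        ∏ i : Fin 2, (if σ (![0,1] i) then α else 1 - α) :=
  pairWeight_eval _ _ _ _ _ _ (![0,1,1,1] : Fin 4 → Fin 2) ![0,1] (by decide)
    (by simp only [adj_iff]; decide)
    (by
      intro v
      fin_cases v
      · exact SimpleGraph.Reachable.refl _
      · exact SimpleGraph.Reachable.refl _
      · exact (show (openGraph cycle4 ![false,true,true,false]).Reachable 1 2 from (cyc_adj _ 1 rfl (by decide) (by decide)).reachable)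
      · exact ((show (openGraph cycle4 ![false,true,true,false]).Reachable 1 2 from (cyc_adj _ 1 rfl (by decide) (by decide)).reachable).trans (show (openGraph cycle4 ![false,true,true,false]).Reachable 2 3 from (cyc_adj _ 2 rfl (by decide) (by decide)).reachable)))
    hσ

lemma eval_7 (p q α : ℝ) (σ : Fin 4 → Bool)
    (hσ : ∀ v w, (openGraph cycle4 ![true,true,true,false]).Adj v w → σ v = σ w) :
    crcmPairWeight cycle4 p q α 0 ![true,true,true,false] σ =
      (∏ e : Fin 4, if ![true,true,true,false] e then p else 1 - p) * q ^ 1 *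
        ∏ i : Fin 1, (if σ (![0] i) then α else 1 - α) :=
  pairWeight_eval _ _ _ _ _ _ (![0,0,0,0] : Fin 4 → Fin 1) ![0] (by decide)
    (by simp only [adj_iff]; decide)
    (by
      intro v
      fin_cases v
      · exact SimpleGraph.Reachable.refl _
      · exact (show (openGraph cycle4 ![true,true,true,false]).Reachable 0 1 from (cyc_adj _ 0 rfl (by decide) (by decide)).reachable)
      · exact ((show (openGraph cycle4 ![true,true,true,false]).Reachable 0 1 from (cyc_adj _ 0 rfl (by decide) (by decide)).reachable).trans (show (openGraph cycle4 ![true,true,true,false]).Reachable 1 2 from (cyc_adj _ 1 rfl (by decide) (by decide)).reachable))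
      · exact (((show (openGraph cycle4 ![true,true,true,false]).Reachable 0 1 from (cyc_adj _ 0 rfl (by decide) (by decide)).reachable).trans (show (openGraph cycle4 ![true,true,true,false]).Reachable 1 2 from (cyc_adj _ 1 rfl (by decide) (by decide)).reachable)).trans (show (openGraph cycle4 ![true,true,true,false]).Reachable 2 3 from (cyc_adj _ 2 rfl (by decide) (by decide)).reachable)))
    hσ

lemma eval_8 (p q α : ℝ) (σ : Fin 4 → Bool)
    (hσ : ∀ v w, (openGraph cycle4 ![false,false,false,true]).Adj v w → σ v = σ w) :
    crcmPairWeight cycle4 p q α 0 ![false,false,false,true] σ =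
      (∏ e : Fin 4, if ![false,false,false,true] e then p else 1 - p) * q ^ 3 *
        ∏ i : Fin 3, (if σ (![0,1,2] i) then α else 1 - α) :=
  pairWeight_eval _ _ _ _ _ _ (![0,1,2,0] : Fin 4 → Fin 3) ![0,1,2] (by decide)
    (by simp only [adj_iff]; decide)
    (by
      intro v
      fin_cases v
      · exact SimpleGraph.Reachable.refl _
      · exact SimpleGraph.Reachable.refl _
      · exact SimpleGraph.Reachable.refl _
      · exact (show (openGraph cycle4 ![false,false,false,true]).Reachable 0 3 from (cyc_adj _ 3 rfl (by decide) (by decide)).reachable))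
    hσ

lemma eval_9 (p q α : ℝ) (σ : Fin 4 → Bool)
    (hσ : ∀ v w, (openGraph cycle4 ![true,false,false,true]).Adj v w → σ v = σ w) :
    crcmPairWeight cycle4 p q α 0 ![true,false,false,true] σ =
      (∏ e : Fin 4, if ![true,false,false,true] e then p else 1 - p) * q ^ 2 *
        ∏ i : Fin 2, (if σ (![0,2] i) then α else 1 - α) :=
  pairWeight_eval _ _ _ _ _ _ (![0,0,1,0] : Fin 4 → Fin 2) ![0,2] (by decide)
    (by simp only [adj_iff]; decide)
    (by
      intro v
      fin_cases v
      · exact SimpleGraph.Reachable.refl _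
      · exact (show (openGraph cycle4 ![true,false,false,true]).Reachable 0 1 from (cyc_adj _ 0 rfl (by decide) (by decide)).reachable)
      · exact SimpleGraph.Reachable.refl _
      · exact (show (openGraph cycle4 ![true,false,false,true]).Reachable 0 3 from (cyc_adj _ 3 rfl (by decide) (by decide)).reachable))
    hσ

lemma eval_10 (p q α : ℝ) (σ : Fin 4 → Bool)
    (hσ : ∀ v w, (openGraph cycle4 ![false,true,false,true]).Adj v w → σ v = σ w) :
    crcmPairWeight cycle4 p q α 0 ![false,true,false,true] σ =
      (∏ e : Fin 4, if ![false,true,false,true] e then p else 1 - p) * q ^ 2 *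
        ∏ i : Fin 2, (if σ (![0,1] i) then α else 1 - α) :=
  pairWeight_eval _ _ _ _ _ _ (![0,1,1,0] : Fin 4 → Fin 2) ![0,1] (by decide)
    (by simp only [adj_iff]; decide)
    (by
      intro v
      fin_cases v
      · exact SimpleGraph.Reachable.refl _
      · exact SimpleGraph.Reachable.refl _
      · exact (show (openGraph cycle4 ![false,true,false,true]).Reachable 1 2 from (cyc_adj _ 1 rfl (by decide) (by decide)).reachable)
      · exact (show (openGraph cycle4 ![false,true,false,true]).Reachable 0 3 from (cyc_adj _ 3 rfl (by decide) (by decide)).reachable))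
    hσ

lemma eval_11 (p q α : ℝ) (σ : Fin 4 → Bool)
    (hσ : ∀ v w, (openGraph cycle4 ![true,true,false,true]).Adj v w → σ v = σ w) :
    crcmPairWeight cycle4 p q α 0 ![true,true,false,true] σ =
      (∏ e : Fin 4, if ![true,true,false,true] e then p else 1 - p) * q ^ 1 *
        ∏ i : Fin 1, (if σ (![0] i) then α else 1 - α) :=
  pairWeight_eval _ _ _ _ _ _ (![0,0,0,0] : Fin 4 → Fin 1) ![0] (by decide)
    (by simp only [adj_iff]; decide)
    (by
      intro v
      fin_cases v
      · exact SimpleGraph.Reachable.refl _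
      · exact (show (openGraph cycle4 ![true,true,false,true]).Reachable 0 1 from (cyc_adj _ 0 rfl (by decide) (by decide)).reachable)
      · exact ((show (openGraph cycle4 ![true,true,false,true]).Reachable 0 1 from (cyc_adj _ 0 rfl (by decide) (by decide)).reachable).trans (show (openGraph cycle4 ![true,true,false,true]).Reachable 1 2 from (cyc_adj _ 1 rfl (by decide) (by decide)).reachable))
      · exact (show (openGraph cycle4 ![true,true,false,true]).Reachable 0 3 from (cyc_adj _ 3 rfl (by decide) (by decide)).reachable))
    hσ

lemma eval_12 (p q α : ℝ) (σ : Fin 4 → Bool)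
    (hσ : ∀ v w, (openGraph cycle4 ![false,false,true,true]).Adj v w → σ v = σ w) :
    crcmPairWeight cycle4 p q α 0 ![false,false,true,true] σ =
      (∏ e : Fin 4, if ![false,false,true,true] e then p else 1 - p) * q ^ 2 *
        ∏ i : Fin 2, (if σ (![0,1] i) then α else 1 - α) :=
  pairWeight_eval _ _ _ _ _ _ (![0,1,0,0] : Fin 4 → Fin 2) ![0,1] (by decide)
    (by simp only [adj_iff]; decide)
    (by
      intro v
      fin_cases v
      · exact SimpleGraph.Reachable.refl _
      · exact SimpleGraph.Reachable.refl _
      · exact ((show (openGraph cycle4 ![false,false,true,true]).Reachable 0 3 from (cyc_adj _ 3 rfl (by decide) (by decide)).reachable).trans (show (openGraph cycle4 ![false,false,true,true]).Reachable 3 2 from (cyc_adj _ 2 rfl (by decide) (by decide)).reachable))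
      · exact (show (openGraph cycle4 ![false,false,true,true]).Reachable 0 3 from (cyc_adj _ 3 rfl (by decide) (by decide)).reachable))
    hσ

lemma eval_13 (p q α : ℝ) (σ : Fin 4 → Bool)
    (hσ : ∀ v w, (openGraph cycle4 ![true,false,true,true]).Adj v w → σ v = σ w) :
    crcmPairWeight cycle4 p q α 0 ![true,false,true,true] σ =
      (∏ e : Fin 4, if ![true,false,true,true] e then p else 1 - p) * q ^ 1 *
        ∏ i : Fin 1, (if σ (![0] i) then α else 1 - α) :=
  pairWeight_eval _ _ _ _ _ _ (![0,0,0,0] : Fin 4 → Fin 1) ![0] (by decide)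
    (by simp only [adj_iff]; decide)
    (by
      intro v
      fin_cases v
      · exact SimpleGraph.Reachable.refl _
      · exact (show (openGraph cycle4 ![true,false,true,true]).Reachable 0 1 from (cyc_adj _ 0 rfl (by decide) (by decide)).reachable)
      · exact ((show (openGraph cycle4 ![true,false,true,true]).Reachable 0 3 from (cyc_adj _ 3 rfl (by decide) (by decide)).reachable).trans (show (openGraph cycle4 ![true,false,true,true]).Reachable 3 2 from (cyc_adj _ 2 rfl (by decide) (by decide)).reachable))
      · exact (show (openGraph cycle4 ![true,false,true,true]).Reachable 0 3 from (cyc_adj _ 3 rfl (by decide) (by decide)).reachable))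
    hσ

lemma eval_14 (p q α : ℝ) (σ : Fin 4 → Bool)
    (hσ : ∀ v w, (openGraph cycle4 ![false,true,true,true]).Adj v w → σ v = σ w) :
    crcmPairWeight cycle4 p q α 0 ![false,true,true,true] σ =
      (∏ e : Fin 4, if ![false,true,true,true] e then p else 1 - p) * q ^ 1 *
        ∏ i : Fin 1, (if σ (![0] i) then α else 1 - α) :=
  pairWeight_eval _ _ _ _ _ _ (![0,0,0,0] : Fin 4 → Fin 1) ![0] (by decide)
    (by simp only [adj_iff]; decide)
    (by
      intro v
      fin_cases v
      · exact SimpleGraph.Reachable.refl _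
      · exact (((show (openGraph cycle4 ![false,true,true,true]).Reachable 0 3 from (cyc_adj _ 3 rfl (by decide) (by decide)).reachable).trans (show (openGraph cycle4 ![false,true,true,true]).Reachable 3 2 from (cyc_adj _ 2 rfl (by decide) (by decide)).reachable)).trans (show (openGraph cycle4 ![false,true,true,true]).Reachable 2 1 from (cyc_adj _ 1 rfl (by decide) (by decide)).reachable))
      · exact ((show (openGraph cycle4 ![false,true,true,true]).Reachable 0 3 from (cyc_adj _ 3 rfl (by decide) (by decide)).reachable).trans (show (openGraph cycle4 ![false,true,true,true]).Reachable 3 2 from (cyc_adj _ 2 rfl (by decide) (by decide)).reachable))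
      · exact (show (openGraph cycle4 ![false,true,true,true]).Reachable 0 3 from (cyc_adj _ 3 rfl (by decide) (by decide)).reachable))
    hσ

lemma eval_15 (p q α : ℝ) (σ : Fin 4 → Bool)
    (hσ : ∀ v w, (openGraph cycle4 ![true,true,true,true]).Adj v w → σ v = σ w) :
    crcmPairWeight cycle4 p q α 0 ![true,true,true,true] σ =
      (∏ e : Fin 4, if ![true,true,true,true] e then p else 1 - p) * q ^ 1 *
        ∏ i : Fin 1, (if σ (![0] i) then α else 1 - α) :=
  pairWeight_eval _ _ _ _ _ _ (![0,0,0,0] : Fin 4 → Fin 1) ![0] (by decide)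
    (by simp only [adj_iff]; decide)
    (by
      intro v
      fin_cases v
      · exact SimpleGraph.Reachable.refl _
      · exact (show (openGraph cycle4 ![true,true,true,true]).Reachable 0 1 from (cyc_adj _ 0 rfl (by decide) (by decide)).reachable)
      · exact ((show (openGraph cycle4 ![true,true,true,true]).Reachable 0 1 from (cyc_adj _ 0 rfl (by decide) (by decide)).reachable).trans (show (openGraph cycle4 ![true,true,true,true]).Reachable 1 2 from (cyc_adj _ 1 rfl (by decide) (by decide)).reachable))
      · exact (show (openGraph cycle4 ![true,true,true,true]).Reachable 0 3 from (cyc_adj _ 3 rfl (by decide) (by decide)).reachable))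
    hσ


lemma pairWeight_zero {V E : Type} [Fintype V] [Fintype E]
    (ends : E → Sym2 V) (p q α h : ℝ) (ω : E → Bool) (σ : V → Bool) (v w : V)
    (ha : (openGraph ends ω).Adj v w) (hne : σ v ≠ σ w) :
    crcmPairWeight ends p q α h ω σ = 0 := by
  rw [crcmPairWeight, if_neg]
  exact fun hcon => hne (hcon v w ha.reachable)

lemma pairWeight_nonneg {V E : Type} [Fintype V] [Fintype E]
    (ends : E → Sym2 V) (p q α h : ℝ) (ω : E → Bool) (σ : V → Bool)
    (hp0 : 0 ≤ p) (hp1 : p ≤ 1) (hq : 0 ≤ q) (hα0 : 0 ≤ α) (hα1 : α ≤ 1) :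
    0 ≤ crcmPairWeight ends p q α h ω σ := by
  rw [crcmPairWeight]
  split
  · refine mul_nonneg (mul_nonneg (Finset.prod_nonneg fun e _ => ?_) (pow_nonneg hq _))
      (finprod_nonneg fun C => ?_)
    · split <;> linarith
    · split
      · exact mul_nonneg hα0 (Real.exp_nonneg _)
      · linarith
  · exact le_refl 0

def tupEquiv : Bool × Bool × Bool × Bool ≃ (Fin 4 → Bool) where
  toFun x := ![x.1, x.2.1, x.2.2.1, x.2.2.2]
  invFun ω := (ω 0, ω 1, ω 2, ω 3)
  left_inv := by decide
  right_inv := by intro ω; funext i; fin_cases i <;> rfl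

lemma expand_sum (f : (Fin 4 → Bool) → ℝ) :
    ∑ ω : Fin 4 → Bool, f ω =
      f ![false,false,false,false] + f ![true,false,false,false] + f ![false,true,false,false]
      + f ![true,true,false,false] + f ![false,false,true,false] + f ![true,false,true,false]
      + f ![false,true,true,false] + f ![true,true,true,false] + f ![false,false,false,true]
      + f ![true,false,false,true] + f ![false,true,false,true] + f ![true,true,false,true]
      + f ![false,false,true,true] + f ![true,false,true,true] + f ![false,true,true,true]
      + f ![true,true,true,true] := by
  rw [← Equiv.sum_comp tupEquiv f]
  simp only [Fintype.sum_prod_type, Fintype.sum_bool, tupEquiv, Equiv.coe_fn_mk]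
  ring
lemma num_N1 (q α : ℝ) :
    (∑ ω : Fin 4 → Bool, crcmPairWeight cycle4 (1/2) q α 0 ω ![true,true,true,true]) = (q^4*α^4 + 4*q^3*α^3 + 6*q^2*α^2 + 5*(q*α))/16 := by
  rw [expand_sum, eval_0 (1/2) q α ![true,true,true,true] (by simp only [adj_iff]; decide),
    eval_1 (1/2) q α ![true,true,true,true] (by simp only [adj_iff]; decide),
    eval_2 (1/2) q α ![true,true,true,true] (by simp only [adj_iff]; decide),
    eval_3 (1/2) q α ![true,true,true,true] (by simp only [adj_iff]; decide),
    eval_4 (1/2) q α ![true,true,true,true] (by simp only [adj_iff]; decide),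
    eval_5 (1/2) q α ![true,true,true,true] (by simp only [adj_iff]; decide),
    eval_6 (1/2) q α ![true,true,true,true] (by simp only [adj_iff]; decide),
    eval_7 (1/2) q α ![true,true,true,true] (by simp only [adj_iff]; decide),
    eval_8 (1/2) q α ![true,true,true,true] (by simp only [adj_iff]; decide),
    eval_9 (1/2) q α ![true,true,true,true] (by simp only [adj_iff]; decide),
    eval_10 (1/2) q α ![true,true,true,true] (by simp only [adj_iff]; decide),
    eval_11 (1/2) q α ![true,true,true,true] (by simp only [adj_iff]; decide),
    eval_12 (1/2) q α ![true,true,true,true] (by simp only [adj_iff]; decide),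
    eval_13 (1/2) q α ![true,true,true,true] (by simp only [adj_iff]; decide),
    eval_14 (1/2) q α ![true,true,true,true] (by simp only [adj_iff]; decide),
    eval_15 (1/2) q α ![true,true,true,true] (by simp only [adj_iff]; decide)]
  norm_num [Fin.prod_univ_succ, Matrix.cons_val_zero, Matrix.cons_val_succ]
  simp +decide only [ite_true, ite_false, Bool.false_eq_true]
  ring

lemma num_N2 (q α : ℝ) :
    (∑ ω : Fin 4 → Bool, crcmPairWeight cycle4 (1/2) q α 0 ω ![true,false,true,false]) = q^4*α^2*(1-α)^2/16 := by
  rw [expand_sum, eval_0 (1/2) q α ![true,false,true,false] (by simp only [adj_iff]; decide),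
    pairWeight_zero cycle4 (1/2) q α 0 ![true,false,false,false] ![true,false,true,false] 0 1 (cyc_adj _ 0 rfl (by decide) (by decide)) (by decide),
    pairWeight_zero cycle4 (1/2) q α 0 ![false,true,false,false] ![true,false,true,false] 1 2 (cyc_adj _ 1 rfl (by decide) (by decide)) (by decide),
    pairWeight_zero cycle4 (1/2) q α 0 ![true,true,false,false] ![true,false,true,false] 0 1 (cyc_adj _ 0 rfl (by decide) (by decide)) (by decide),
    pairWeight_zero cycle4 (1/2) q α 0 ![false,false,true,false] ![true,false,true,false] 2 3 (cyc_adj _ 2 rfl (by decide) (by decide)) (by decide),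
    pairWeight_zero cycle4 (1/2) q α 0 ![true,false,true,false] ![true,false,true,false] 0 1 (cyc_adj _ 0 rfl (by decide) (by decide)) (by decide),
    pairWeight_zero cycle4 (1/2) q α 0 ![false,true,true,false] ![true,false,true,false] 1 2 (cyc_adj _ 1 rfl (by decide) (by decide)) (by decide),
    pairWeight_zero cycle4 (1/2) q α 0 ![true,true,true,false] ![true,false,true,false] 0 1 (cyc_adj _ 0 rfl (by decide) (by decide)) (by decide),
    pairWeight_zero cycle4 (1/2) q α 0 ![false,false,false,true] ![true,false,true,false] 3 0 (cyc_adj _ 3 rfl (by decide) (by decide)) (by decide),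
    pairWeight_zero cycle4 (1/2) q α 0 ![true,false,false,true] ![true,false,true,false] 0 1 (cyc_adj _ 0 rfl (by decide) (by decide)) (by decide),
    pairWeight_zero cycle4 (1/2) q α 0 ![false,true,false,true] ![true,false,true,false] 1 2 (cyc_adj _ 1 rfl (by decide) (by decide)) (by decide),
    pairWeight_zero cycle4 (1/2) q α 0 ![true,true,false,true] ![true,false,true,false] 0 1 (cyc_adj _ 0 rfl (by decide) (by decide)) (by decide),
    pairWeight_zero cycle4 (1/2) q α 0 ![false,false,true,true] ![true,false,true,false] 2 3 (cyc_adj _ 2 rfl (by decide) (by decide)) (by decide),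
    pairWeight_zero cycle4 (1/2) q α 0 ![true,false,true,true] ![true,false,true,false] 0 1 (cyc_adj _ 0 rfl (by decide) (by decide)) (by decide),
    pairWeight_zero cycle4 (1/2) q α 0 ![false,true,true,true] ![true,false,true,false] 1 2 (cyc_adj _ 1 rfl (by decide) (by decide)) (by decide),
    pairWeight_zero cycle4 (1/2) q α 0 ![true,true,true,true] ![true,false,true,false] 0 1 (cyc_adj _ 0 rfl (by decide) (by decide)) (by decide)]
  norm_num [Fin.prod_univ_succ, Matrix.cons_val_zero, Matrix.cons_val_succ]
  simp +decide only [ite_true, ite_false, Bool.false_eq_true]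
  ring

lemma num_N3 (q α : ℝ) :
    (∑ ω : Fin 4 → Bool, crcmPairWeight cycle4 (1/2) q α 0 ω ![true,true,true,false]) = (q^4*α^3*(1-α) + 2*(q^3*α^2*(1-α)) + q^2*α*(1-α))/16 := by
  rw [expand_sum, eval_0 (1/2) q α ![true,true,true,false] (by simp only [adj_iff]; decide),
    eval_1 (1/2) q α ![true,true,true,false] (by simp only [adj_iff]; decide),
    eval_2 (1/2) q α ![true,true,true,false] (by simp only [adj_iff]; decide),
    eval_3 (1/2) q α ![true,true,true,false] (by simp only [adj_iff]; decide),
    pairWeight_zero cycle4 (1/2) q α 0 ![false,false,true,false] ![true,true,true,false] 2 3 (cyc_adj _ 2 rfl (by decide) (by decide)) (by decide),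
    pairWeight_zero cycle4 (1/2) q α 0 ![true,false,true,false] ![true,true,true,false] 2 3 (cyc_adj _ 2 rfl (by decide) (by decide)) (by decide),
    pairWeight_zero cycle4 (1/2) q α 0 ![false,true,true,false] ![true,true,true,false] 2 3 (cyc_adj _ 2 rfl (by decide) (by decide)) (by decide),
    pairWeight_zero cycle4 (1/2) q α 0 ![true,true,true,false] ![true,true,true,false] 2 3 (cyc_adj _ 2 rfl (by decide) (by decide)) (by decide),
    pairWeight_zero cycle4 (1/2) q α 0 ![false,false,false,true] ![true,true,true,false] 3 0 (cyc_adj _ 3 rfl (by decide) (by decide)) (by decide),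
    pairWeight_zero cycle4 (1/2) q α 0 ![true,false,false,true] ![true,true,true,false] 3 0 (cyc_adj _ 3 rfl (by decide) (by decide)) (by decide),
    pairWeight_zero cycle4 (1/2) q α 0 ![false,true,false,true] ![true,true,true,false] 3 0 (cyc_adj _ 3 rfl (by decide) (by decide)) (by decide),
    pairWeight_zero cycle4 (1/2) q α 0 ![true,true,false,true] ![true,true,true,false] 3 0 (cyc_adj _ 3 rfl (by decide) (by decide)) (by decide),
    pairWeight_zero cycle4 (1/2) q α 0 ![false,false,true,true] ![true,true,true,false] 2 3 (cyc_adj _ 2 rfl (by decide) (by decide)) (by decide),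
    pairWeight_zero cycle4 (1/2) q α 0 ![true,false,true,true] ![true,true,true,false] 2 3 (cyc_adj _ 2 rfl (by decide) (by decide)) (by decide),
    pairWeight_zero cycle4 (1/2) q α 0 ![false,true,true,true] ![true,true,true,false] 2 3 (cyc_adj _ 2 rfl (by decide) (by decide)) (by decide),
    pairWeight_zero cycle4 (1/2) q α 0 ![true,true,true,true] ![true,true,true,false] 2 3 (cyc_adj _ 2 rfl (by decide) (by decide)) (by decide)]
  norm_num [Fin.prod_univ_succ, Matrix.cons_val_zero, Matrix.cons_val_succ]
  simp +decide only [ite_true, ite_false, Bool.false_eq_true]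
  ring

lemma num_N4 (q α : ℝ) :
    (∑ ω : Fin 4 → Bool, crcmPairWeight cycle4 (1/2) q α 0 ω ![true,false,true,true]) = (q^4*α^3*(1-α) + 2*(q^3*α^2*(1-α)) + q^2*α*(1-α))/16 := by
  rw [expand_sum, eval_0 (1/2) q α ![true,false,true,true] (by simp only [adj_iff]; decide),
    pairWeight_zero cycle4 (1/2) q α 0 ![true,false,false,false] ![true,false,true,true] 0 1 (cyc_adj _ 0 rfl (by decide) (by decide)) (by decide),
    pairWeight_zero cycle4 (1/2) q α 0 ![false,true,false,false] ![true,false,true,true] 1 2 (cyc_adj _ 1 rfl (by decide) (by decide)) (by decide),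
    pairWeight_zero cycle4 (1/2) q α 0 ![true,true,false,false] ![true,false,true,true] 0 1 (cyc_adj _ 0 rfl (by decide) (by decide)) (by decide),
    eval_4 (1/2) q α ![true,false,true,true] (by simp only [adj_iff]; decide),
    pairWeight_zero cycle4 (1/2) q α 0 ![true,false,true,false] ![true,false,true,true] 0 1 (cyc_adj _ 0 rfl (by decide) (by decide)) (by decide),
    pairWeight_zero cycle4 (1/2) q α 0 ![false,true,true,false] ![true,false,true,true] 1 2 (cyc_adj _ 1 rfl (by decide) (by decide)) (by decide),
    pairWeight_zero cycle4 (1/2) q α 0 ![true,true,true,false] ![true,false,true,true] 0 1 (cyc_adj _ 0 rfl (by decide) (by decide)) (by decide),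
    eval_8 (1/2) q α ![true,false,true,true] (by simp only [adj_iff]; decide),
    pairWeight_zero cycle4 (1/2) q α 0 ![true,false,false,true] ![true,false,true,true] 0 1 (cyc_adj _ 0 rfl (by decide) (by decide)) (by decide),
    pairWeight_zero cycle4 (1/2) q α 0 ![false,true,false,true] ![true,false,true,true] 1 2 (cyc_adj _ 1 rfl (by decide) (by decide)) (by decide),
    pairWeight_zero cycle4 (1/2) q α 0 ![true,true,false,true] ![true,false,true,true] 0 1 (cyc_adj _ 0 rfl (by decide) (by decide)) (by decide),
    eval_12 (1/2) q α ![true,false,true,true] (by simp only [adj_iff]; decide),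
    pairWeight_zero cycle4 (1/2) q α 0 ![true,false,true,true] ![true,false,true,true] 0 1 (cyc_adj _ 0 rfl (by decide) (by decide)) (by decide),
    pairWeight_zero cycle4 (1/2) q α 0 ![false,true,true,true] ![true,false,true,true] 1 2 (cyc_adj _ 1 rfl (by decide) (by decide)) (by decide),
    pairWeight_zero cycle4 (1/2) q α 0 ![true,true,true,true] ![true,false,true,true] 0 1 (cyc_adj _ 0 rfl (by decide) (by decide)) (by decide)]
  norm_num [Fin.prod_univ_succ, Matrix.cons_val_zero, Matrix.cons_val_succ]
  simp +decide only [ite_true, ite_false, Bool.false_eq_true]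
  ring



/-- If `qα < 1 ≤ q(1-α)`, the coloured random-cluster measure can fail to be monotone:
on the 4-cycle `u = 0, x = 1, v = 2, y = 3`, with `A = {u,v}`, there is `p ∈ (0,1)` for
which the lattice inequality `π(A^{xy}) π(A) ≥ π(A^x) π(A^y)` fails. -/
theorem stmt_18 (q α : ℝ) (hq : 1 ≤ q) (hα : α ∈ Set.Ioo (0 : ℝ) 1)
    (hqα : q * α < 1) (hqα' : 1 ≤ q * (1 - α)) :
    ∃ p ∈ Set.Ioo (0 : ℝ) 1,
      crcmSpinProb cycle4 p q α ![true, true, true, true] *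
          crcmSpinProb cycle4 p q α ![true, false, true, false] <
        crcmSpinProb cycle4 p q α ![true, true, true, false] *
          crcmSpinProb cycle4 p q α ![true, false, true, true] := by
  obtain ⟨hα0, hα1⟩ := hα
  refine ⟨1/2, by norm_num, ?_⟩
  have hq0 : (0:ℝ) < q := lt_of_lt_of_le one_pos hq
  set Z : ℝ := ∑ ωσ : (Fin 4 → Bool) × (Fin 4 → Bool),
      crcmPairWeight cycle4 (1/2) q α 0 ωσ.1 ωσ.2 with hZdef
  have hZ : 0 < Z := by
    rw [hZdef]
    refine Finset.sum_pos' (fun i _ => pairWeight_nonneg _ _ _ _ _ _ _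
      (by norm_num) (by norm_num) (le_of_lt hq0) (le_of_lt hα0) (le_of_lt hα1)) ?_
    refine ⟨(![false,false,false,false], ![true,true,true,true]), Finset.mem_univ _, ?_⟩
    have := eval_0 (1/2) q α ![true,true,true,true] (by simp only [adj_iff]; decide)
    rw [this]
    norm_num [Fin.prod_univ_succ, Matrix.cons_val_zero, Matrix.cons_val_succ]
    positivity
  unfold crcmSpinProb
  rw [← hZdef, num_N1, num_N2, num_N3, num_N4]
  have hcomm : ∀ X Y : ℝ, X/Z * (Y/Z) = X*Y/(Z*Z) := fun X Y => div_mul_div_comm X Z Y Z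
  rw [hcomm, hcomm, div_lt_div_iff_of_pos_right (mul_pos hZ hZ)]
  have hpos : 0 < q^4*α^2*(1-α)^2*(1-q*α) := by
    have h1 : (0:ℝ) < 1 - α := by linarith
    have h2 : (0:ℝ) < 1 - q*α := by linarith
    positivity
  have key : (q^4*α^4 + 4*q^3*α^3 + 6*q^2*α^2 + 5*(q*α))/16 * (q^4*α^2*(1-α)^2/16) <
      (q^4*α^3*(1-α) + 2*(q^3*α^2*(1-α)) + q^2*α*(1-α))/16 *
        ((q^4*α^3*(1-α) + 2*(q^3*α^2*(1-α)) + q^2*α*(1-α))/16) := by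
    have hdiff : (q^4*α^3*(1-α) + 2*(q^3*α^2*(1-α)) + q^2*α*(1-α))/16 *
        ((q^4*α^3*(1-α) + 2*(q^3*α^2*(1-α)) + q^2*α*(1-α))/16) -
        (q^4*α^4 + 4*q^3*α^3 + 6*q^2*α^2 + 5*(q*α))/16 * (q^4*α^2*(1-α)^2/16) =
        (1/256) * (q^4*α^2*(1-α)^2*(1-q*α)) := by ring
    nlinarith [hdiff, hpos]
  exact key
end

section
/- Let μ₁, μ₂ be strictly positive probability measures on {0,1}^E with E finite, at least one of which is monotone. If μ₁(ω^e)/μ₁(ω) ≤ μ₂(ω^e)/μ₂(ω) for every ω ∈ {0,1}^E with ω(e)=0 and every e ∈ E, then μ₁ is stochastically dominated by μ₂. -/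
open Finset

/-- A strictly positive weight `μ` on `{0,1}^E` is monotone: its one-point conditional
probabilities are non-decreasing in the boundary condition. -/
def monotoneMeasure {E : Type} [DecidableEq E] (μ : (E → Bool) → ℝ) : Prop :=
  ∀ (e : E) (η₁ η₂ : E → Bool), η₁ ≤ η₂ →
    μ (Function.update η₁ e true) /
        (μ (Function.update η₁ e true) + μ (Function.update η₁ e false)) ≤
      μ (Function.update η₂ e true) /
        (μ (Function.update η₂ e true) + μ (Function.update η₂ e false))

namespace HolleyAux

variable {E : Type} [DecidableEq E]

lemma cond_le_iff {T1 F1 T2 F2 : ℝ} (hT1 : 0 < T1) (hF1 : 0 < F1) (hT2 : 0 < T2) (hF2 : 0 < F2) :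
    T1 / (T1 + F1) ≤ T2 / (T2 + F2) ↔ T1 * F2 ≤ T2 * F1 := by
  rw [div_le_div_iff₀ (by linarith) (by linarith)]
  constructor <;> intro h <;> nlinarith

lemma core {A0 A1 B0 B1 C0 C1 D0 D1 : ℝ}
    (hB0 : 0 < B0) (hB1 : 0 < B1) (hD0 : 0 < D0) (hD1 : 0 < D1)
    (h0 : A0 * D0 ≤ C0 * B0) (h1 : A1 * D1 ≤ C1 * B1) (he : B1 * D0 ≤ D1 * B0)
    (hm : B1 * A0 ≤ A1 * B0 ∨ D1 * C0 ≤ C1 * D0) :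
    (A0 + A1) * (D0 + D1) ≤ (C0 + C1) * (B0 + B1) := by
  have key1 : B1 * A0 ≤ A1 * B0 → (A0 + A1) * (D0 + D1) ≤ (C0 + C1) * (B0 + B1) := by
    intro hc
    have hid : B0 * B1 * ((C0 + C1) * (B0 + B1) - (A0 + A1) * (D0 + D1))
        = (A1 * B0 - B1 * A0) * (D1 * B0 - B1 * D0)
          + (B0 + B1) * (B1 * (C0 * B0 - A0 * D0) + B0 * (C1 * B1 - A1 * D1)) := by ring
    nlinarith [mul_nonneg (sub_nonneg.2 hc) (sub_nonneg.2 he), mul_pos hB0 hB1,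
      mul_nonneg (add_pos hB0 hB1).le
        (add_nonneg (mul_nonneg hB1.le (sub_nonneg.2 h0)) (mul_nonneg hB0.le (sub_nonneg.2 h1)))]
  rcases hm with hm | hm
  · exact key1 hm
  · by_cases hc : B1 * A0 ≤ A1 * B0
    · exact key1 hc
    · push_neg at hc
      have hid : B0 * D0 * ((C0 + C1) * (B0 + B1) - (A0 + A1) * (D0 + D1))
          = (B1 * A0 - A1 * B0) * (D0 + D1) * D0
            + (B0 + B1) * ((C0 * B0 - A0 * D0) * (D0 + D1) + B0 * (C1 * D0 - D1 * C0)) := by ring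
      nlinarith [mul_pos hB0 hD0,
        mul_nonneg (mul_nonneg (sub_nonneg.2 hc.le) (add_pos hD0 hD1).le) hD0.le,
        mul_nonneg (add_pos hB0 hB1).le
          (add_nonneg (mul_nonneg (sub_nonneg.2 h0) (add_pos hD0 hD1).le)
            (mul_nonneg hB0.le (sub_nonneg.2 hm)))]

lemma frac_mono {a b x0 x1 y0 y1 : ℝ} (hx0 : 0 < x0) (hx1 : 0 < x1) (hy0 : 0 < y0) (hy1 : 0 < y1)
    (hab : a ≤ b) (hxy : x1 * y0 ≤ y1 * x0) :
    (a * x0 + b * x1) / (x0 + x1) ≤ (a * y0 + b * y1) / (y0 + y1) := by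
  rw [div_le_div_iff₀ (by linarith) (by linarith)]
  nlinarith [mul_nonneg (sub_nonneg.2 hab) (sub_nonneg.2 hxy)]

lemma update_le_update {η₁ η₂ : E → Bool} (h : η₁ ≤ η₂) (x : E) (b : Bool) :
    Function.update η₁ x b ≤ Function.update η₂ x b := by
  intro y
  by_cases hy : y = x
  · simp [hy, Function.update]
  · simpa [hy, Function.update] using h y

lemma le_update_true (η : E → Bool) (x : E) : η ≤ Function.update η x true := by
  intro y; by_cases hy : y = x <;> simp [hy, Function.update]

lemma update_false_le_true (η : E → Bool) (x : E) :
    Function.update η x false ≤ Function.update η x true := by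
  intro y; by_cases hy : y = x <;> simp [hy, Function.update]

/-- cross-multiplied form of monotonicity -/
lemma mono_cross {μ : (E → Bool) → ℝ} (hpos : ∀ ω, 0 < μ ω) (hμ : monotoneMeasure μ)
    (e : E) {η₁ η₂ : E → Bool} (h : η₁ ≤ η₂) :
    μ (Function.update η₁ e true) * μ (Function.update η₂ e false)
      ≤ μ (Function.update η₂ e true) * μ (Function.update η₁ e false) :=
  (cond_le_iff (hpos _) (hpos _) (hpos _) (hpos _)).1 (hμ e η₁ η₂ h)

/-- the marginal weight obtained by summing out coordinate `e` -/
noncomputable def marg (μ : (E → Bool) → ℝ) (e : E) : (E → Bool) → ℝ :=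
  fun ω => μ (Function.update ω e false) + μ (Function.update ω e true)

lemma marg_pos {μ : (E → Bool) → ℝ} (hpos : ∀ ω, 0 < μ ω) (e : E) (ω : E → Bool) :
    0 < marg μ e ω := add_pos (hpos _) (hpos _)

lemma marg_update (μ : (E → Bool) → ℝ) (e : E) (ω : E → Bool) (b : Bool) :
    marg μ e (Function.update ω e b) = marg μ e ω := by
  simp [marg, Function.update_idem]

lemma marg_mono {μ : (E → Bool) → ℝ} (hpos : ∀ ω, 0 < μ ω) (hμ : monotoneMeasure μ) (e : E) :
    monotoneMeasure (marg μ e) := by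
  intro f η₁ η₂ hle
  rw [cond_le_iff (marg_pos hpos e _) (marg_pos hpos e _) (marg_pos hpos e _) (marg_pos hpos e _)]
  by_cases hfe : f = e
  · subst hfe
    rw [marg_update, marg_update, marg_update, marg_update]
    exact (mul_comm _ _).le
  · have hcomm : ∀ (η : E → Bool) (b b' : Bool),
        Function.update (Function.update η e b) f b'
          = Function.update (Function.update η f b') e b :=
      fun η b b' => (Function.update_comm hfe b' b η).symm
    show (μ _ + μ _) * (μ _ + μ _) ≤ (μ _ + μ _) * (μ _ + μ _)
    refine core (hpos _) (hpos _) (hpos _) (hpos _) ?_ ?_ ?_ (Or.inl ?_)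
    · have := mono_cross hpos hμ f (update_le_update hle e false)
      rwa [hcomm, hcomm, hcomm, hcomm] at this
    · have := mono_cross hpos hμ f (update_le_update hle e true)
      rwa [hcomm, hcomm, hcomm, hcomm] at this
    · exact mono_cross hpos hμ e (update_le_update hle f false)
    · exact mono_cross hpos hμ e (update_false_le_true η₁ f)

lemma sum_update_pair [Fintype E] (e : E) (F : (E → Bool) → ℝ) :
    ∑ ω : E → Bool, (F (Function.update ω e false) + F (Function.update ω e true))
      = 2 * ∑ ω : E → Bool, F ω := by
  have hinv : Function.Involutive (fun ω : E → Bool => Function.update ω e (!ω e)) := by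
    intro ω; funext x
    by_cases hx : x = e
    · subst hx; simp
    · simp [Function.update_of_ne hx]
  have hflip : ∑ ω : E → Bool, F (Function.update ω e (!ω e)) = ∑ ω : E → Bool, F ω := by
    simpa using Equiv.sum_comp hinv.toPerm F
  have hpt : ∀ ω : E → Bool,
      F (Function.update ω e false) + F (Function.update ω e true)
        = F ω + F (Function.update ω e (!ω e)) := by
    intro ω
    cases h : ω e
    · have : Function.update ω e false = ω := by
        conv_lhs => rw [← h]
        exact Function.update_eq_self e ω
      rw [this]
      simp
    · have : Function.update ω e true = ω := by
        conv_lhs => rw [← h]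
        exact Function.update_eq_self e ω
      rw [this]
      simp [add_comm]
  calc ∑ ω : E → Bool, (F (Function.update ω e false) + F (Function.update ω e true))
      = ∑ ω : E → Bool, (F ω + F (Function.update ω e (!ω e))) :=
        Finset.sum_congr rfl fun ω _ => hpt ω
    _ = 2 * ∑ ω : E → Bool, F ω := by
        rw [Finset.sum_add_distrib, hflip]; ring

lemma sum_marg [Fintype E] (μ : (E → Bool) → ℝ) (e : E) :
    ∑ ω : E → Bool, marg μ e ω = 2 * ∑ ω : E → Bool, μ ω :=
  sum_update_pair e μ

/-- the conditional average of `f` over coordinate `e` -/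
noncomputable def gfun (μ : (E → Bool) → ℝ) (f : (E → Bool) → ℝ) (e : E) : (E → Bool) → ℝ :=
  fun ω =>
    (f (Function.update ω e false) * μ (Function.update ω e false)
      + f (Function.update ω e true) * μ (Function.update ω e true)) / marg μ e ω

lemma sum_gfun [Fintype E] {μ : (E → Bool) → ℝ} (hpos : ∀ ω, 0 < μ ω)
    (f : (E → Bool) → ℝ) (e : E) :
    ∑ ω : E → Bool, f ω * μ ω = (1 / 2) * ∑ ω : E → Bool, gfun μ f e ω * marg μ e ω := by
  have hpt : ∀ ω : E → Bool, gfun μ f e ω * marg μ e ω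
      = f (Function.update ω e false) * μ (Function.update ω e false)
        + f (Function.update ω e true) * μ (Function.update ω e true) :=
    fun ω => div_mul_cancel₀ _ (marg_pos hpos e ω).ne'
  rw [Finset.sum_congr rfl fun ω _ => hpt ω, sum_update_pair e (fun ω => f ω * μ ω)]
  ring

lemma gfun_mono {μ : (E → Bool) → ℝ} (hpos : ∀ ω, 0 < μ ω) (hμ : monotoneMeasure μ)
    {f : (E → Bool) → ℝ} (hf : Monotone f) (e : E) : Monotone (gfun μ f e) := by
  intro ω ω' h
  unfold gfun
  calc (f (Function.update ω e false) * μ (Function.update ω e false)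
      + f (Function.update ω e true) * μ (Function.update ω e true)) / marg μ e ω
      ≤ (f (Function.update ω' e false) * μ (Function.update ω e false)
        + f (Function.update ω' e true) * μ (Function.update ω e true)) / marg μ e ω := by
        have hnum : f (Function.update ω e false) * μ (Function.update ω e false)
              + f (Function.update ω e true) * μ (Function.update ω e true)
            ≤ f (Function.update ω' e false) * μ (Function.update ω e false)
              + f (Function.update ω' e true) * μ (Function.update ω e true) :=
          add_le_add
            (mul_le_mul_of_nonneg_right (hf (update_le_update h e false)) (hpos _).le)
            (mul_le_mul_of_nonneg_right (hf (update_le_update h e true)) (hpos _).le)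
        exact div_le_div_of_nonneg_right hnum (marg_pos hpos e ω).le
    _ ≤ (f (Function.update ω' e false) * μ (Function.update ω' e false)
        + f (Function.update ω' e true) * μ (Function.update ω' e true)) / marg μ e ω' :=
        frac_mono (hpos _) (hpos _) (hpos _) (hpos _)
          (hf (update_false_le_true ω' e)) (mono_cross hpos hμ e h)

lemma gfun_le {μ₁ μ₂ : (E → Bool) → ℝ} (hp1 : ∀ ω, 0 < μ₁ ω) (hp2 : ∀ ω, 0 < μ₂ ω)
    {f : (E → Bool) → ℝ} (hf : Monotone f) (e : E)
    (hp12 : ∀ ω : E → Bool, μ₁ (Function.update ω e true) * μ₂ (Function.update ω e false)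
      ≤ μ₂ (Function.update ω e true) * μ₁ (Function.update ω e false))
    (ω : E → Bool) : gfun μ₁ f e ω ≤ gfun μ₂ f e ω :=
  frac_mono (hp1 _) (hp1 _) (hp2 _) (hp2 _) (hf (update_false_le_true ω e)) (hp12 ω)

lemma main [Fintype E] (s : Finset E) :
    ∀ (μ₁ μ₂ : (E → Bool) → ℝ),
      (∀ ω, 0 < μ₁ ω) → (∀ ω, 0 < μ₂ ω) →
      (∀ ω ω' : E → Bool, (∀ x ∈ s, ω x = ω' x) → μ₁ ω = μ₁ ω') →
      (∀ ω ω' : E → Bool, (∀ x ∈ s, ω x = ω' x) → μ₂ ω = μ₂ ω') →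
      ∑ ω : E → Bool, μ₁ ω = ∑ ω : E → Bool, μ₂ ω →
      monotoneMeasure μ₁ ∨ monotoneMeasure μ₂ →
      (∀ (ω : E → Bool) (x : E), ω x = false →
        μ₁ (Function.update ω x true) / μ₁ ω ≤ μ₂ (Function.update ω x true) / μ₂ ω) →
      ∀ f : (E → Bool) → ℝ, Monotone f →
        ∑ ω : E → Bool, f ω * μ₁ ω ≤ ∑ ω : E → Bool, f ω * μ₂ ω := by
  induction s using Finset.induction_on with
  | empty =>
      intro μ₁ μ₂ hp1 hp2 hd1 hd2 hs _ _ f _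
      have c1 : ∀ ω : E → Bool, μ₁ ω = μ₁ (fun _ => false) := fun ω => hd1 ω _ (by simp)
      have c2 : ∀ ω : E → Bool, μ₂ ω = μ₂ (fun _ => false) := fun ω => hd2 ω _ (by simp)
      have e1 : ∑ ω : E → Bool, μ₁ ω = (Fintype.card (E → Bool) : ℝ) * μ₁ (fun _ => false) := by
        rw [Finset.sum_congr rfl fun ω _ => c1 ω]
        simp [Finset.sum_const, Finset.card_univ, nsmul_eq_mul]
      have e2 : ∑ ω : E → Bool, μ₂ ω = (Fintype.card (E → Bool) : ℝ) * μ₂ (fun _ => false) := by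
        rw [Finset.sum_congr rfl fun ω _ => c2 ω]
        simp [Finset.sum_const, Finset.card_univ, nsmul_eq_mul]
      have hcard : ((Fintype.card (E → Bool) : ℝ)) ≠ 0 := by
        exact_mod_cast Fintype.card_ne_zero
      have hc : μ₁ (fun _ => false) = μ₂ (fun _ => false) := by
        apply mul_left_cancel₀ hcard
        rw [← e1, ← e2, hs]
      apply le_of_eq
      exact Finset.sum_congr rfl fun ω _ => by rw [c1 ω, c2 ω, hc]
  | @insert e s' hes IH =>
      intro μ₁ μ₂ hp1 hp2 hd1 hd2 hs hmono hr f hf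
      -- cross form of the ratio condition at e
      have hp12 : ∀ ω : E → Bool,
          μ₁ (Function.update ω e true) * μ₂ (Function.update ω e false)
            ≤ μ₂ (Function.update ω e true) * μ₁ (Function.update ω e false) := by
        intro ω
        have h0 : (Function.update ω e false) e = false := by simp
        have h := hr (Function.update ω e false) e h0
        rw [Function.update_idem] at h
        exact (div_le_div_iff₀ (hp1 _) (hp2 _)).1 h
      -- dependence of marginals on s'
      have hdν : ∀ (μ : (E → Bool) → ℝ),
          (∀ ω ω' : E → Bool, (∀ x ∈ insert e s', ω x = ω' x) → μ ω = μ ω') →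
          ∀ ω ω' : E → Bool, (∀ x ∈ s', ω x = ω' x) → marg μ e ω = marg μ e ω' := by
        intro μ hd ω ω' hagree
        have hb : ∀ b : Bool, μ (Function.update ω e b) = μ (Function.update ω' e b) := by
          intro b
          apply hd
          intro x hx
          rcases Finset.mem_insert.1 hx with rfl | hx
          · simp
          · have hxe : x ≠ e := fun hh => hes (hh ▸ hx)
            rw [Function.update_of_ne hxe, Function.update_of_ne hxe]
            exact hagree x hx
        simp [marg, hb false, hb true]
      -- sums of marginals agree
      have hsν : ∑ ω : E → Bool, marg μ₁ e ω = ∑ ω : E → Bool, marg μ₂ e ω := by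
        rw [sum_marg, sum_marg, hs]
      -- ratio condition for the marginals
      have hrν : ∀ (σ : E → Bool) (x : E), σ x = false →
          marg μ₁ e (Function.update σ x true) / marg μ₁ e σ
            ≤ marg μ₂ e (Function.update σ x true) / marg μ₂ e σ := by
        intro σ x hσx
        by_cases hxe : x = e
        · subst hxe
          rw [marg_update, marg_update, div_self (marg_pos hp1 _ σ).ne',
            div_self (marg_pos hp2 _ σ).ne']
        · rw [div_le_div_iff₀ (marg_pos hp1 e σ) (marg_pos hp2 e σ)]
          have hcomm : ∀ (η : E → Bool) (b b' : Bool),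
              Function.update (Function.update η e b) x b'
                = Function.update (Function.update η x b') e b :=
            fun η b b' => (Function.update_comm hxe b' b η).symm
          show (μ₁ _ + μ₁ _) * (μ₂ _ + μ₂ _) ≤ (μ₂ _ + μ₂ _) * (μ₁ _ + μ₁ _)
          refine core (hp1 _) (hp1 _) (hp2 _) (hp2 _) ?_ ?_ ?_ ?_
          · have hfx : (Function.update σ e false) x = false := by
              rw [Function.update_of_ne hxe]; exact hσx
            have h := hr (Function.update σ e false) x hfx
            rw [div_le_div_iff₀ (hp1 _) (hp2 _)] at h
            rwa [hcomm σ false true] at h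
          · have hfx : (Function.update σ e true) x = false := by
              rw [Function.update_of_ne hxe]; exact hσx
            have h := hr (Function.update σ e true) x hfx
            rw [div_le_div_iff₀ (hp1 _) (hp2 _)] at h
            rwa [hcomm σ true true] at h
          · exact hp12 σ
          · rcases hmono with hm | hm
            · exact Or.inl (mono_cross hp1 hm e (le_update_true σ x))
            · exact Or.inr (mono_cross hp2 hm e (le_update_true σ x))
      -- pointwise comparison of the conditional averages
      have hgle : ∀ ω : E → Bool, gfun μ₁ f e ω ≤ gfun μ₂ f e ω :=
        gfun_le hp1 hp2 hf e hp12
      rw [sum_gfun hp1 f e, sum_gfun hp2 f e]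
      have hhalf : (0:ℝ) ≤ 1 / 2 := by norm_num
      apply mul_le_mul_of_nonneg_left _ hhalf
      rcases hmono with hm | hm
      · -- μ₁ monotone : use g₁
        calc ∑ ω : E → Bool, gfun μ₁ f e ω * marg μ₁ e ω
            ≤ ∑ ω : E → Bool, gfun μ₁ f e ω * marg μ₂ e ω :=
              IH (marg μ₁ e) (marg μ₂ e) (marg_pos hp1 e) (marg_pos hp2 e)
                (hdν μ₁ hd1) (hdν μ₂ hd2) hsν (Or.inl (marg_mono hp1 hm e)) hrν
                (gfun μ₁ f e) (gfun_mono hp1 hm hf e)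
          _ ≤ ∑ ω : E → Bool, gfun μ₂ f e ω * marg μ₂ e ω :=
              Finset.sum_le_sum fun ω _ =>
                mul_le_mul_of_nonneg_right (hgle ω) (marg_pos hp2 e ω).le
      · -- μ₂ monotone : use g₂
        calc ∑ ω : E → Bool, gfun μ₁ f e ω * marg μ₁ e ω
            ≤ ∑ ω : E → Bool, gfun μ₂ f e ω * marg μ₁ e ω :=
              Finset.sum_le_sum fun ω _ =>
                mul_le_mul_of_nonneg_right (hgle ω) (marg_pos hp1 e ω).le
          _ ≤ ∑ ω : E → Bool, gfun μ₂ f e ω * marg μ₂ e ω :=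
              IH (marg μ₁ e) (marg μ₂ e) (marg_pos hp1 e) (marg_pos hp2 e)
                (hdν μ₁ hd1) (hdν μ₂ hd2) hsν (Or.inr (marg_mono hp2 hm e)) hrν
                (gfun μ₂ f e) (gfun_mono hp2 hm hf e)

end HolleyAux

/-- One-sided Holley inequality: if `μ₁, μ₂` are strictly positive probability measures on
`{0,1}^E`, at least one of which is monotone, and
`μ₁(ω^e)/μ₁(ω) ≤ μ₂(ω^e)/μ₂(ω)` for every `ω` with `ω(e)=0` and every `e`, then `μ₁` is
stochastically dominated by `μ₂`. -/
theorem stmt_19 {E : Type} [Fintype E] [DecidableEq E]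
    (μ₁ μ₂ : (E → Bool) → ℝ)
    (hpos₁ : ∀ ω, 0 < μ₁ ω) (hpos₂ : ∀ ω, 0 < μ₂ ω)
    (hsum₁ : ∑ ω : E → Bool, μ₁ ω = 1) (hsum₂ : ∑ ω : E → Bool, μ₂ ω = 1)
    (hmono : monotoneMeasure μ₁ ∨ monotoneMeasure μ₂)
    (hratio : ∀ (ω : E → Bool) (e : E), ω e = false →
      μ₁ (Function.update ω e true) / μ₁ ω ≤ μ₂ (Function.update ω e true) / μ₂ ω) :
    ∀ f : (E → Bool) → ℝ, Monotone f →
      ∑ ω : E → Bool, f ω * μ₁ ω ≤ ∑ ω : E → Bool, f ω * μ₂ ω :=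
  HolleyAux.main Finset.univ μ₁ μ₂ hpos₁ hpos₂
    (fun ω ω' h => by rw [show ω = ω' from funext fun x => h x (Finset.mem_univ x)])
    (fun ω ω' h => by rw [show ω = ω' from funext fun x => h x (Finset.mem_univ x)])
    (by rw [hsum₁, hsum₂]) hmono hratio
end
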